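/- arXiv:1801.09341 — 4 statements merged into one kernel-verified Lean document; each statement's English description precedes it below -/
import Mathlib

section
/- Conditional Fubini for nonnegative functions: with (Ω, F, P), F₀ ⊆ F, and (G, E, μ) σ-finite as above, if f : Ω × G → [0, +∞] is F⊗E-measurable, then (ω,x) ↦ E[f(·,x)|F₀](ω) is F₀⊗E-measurable, and E[∫_G f(·,x) μ(dx) | F₀] = ∫_G E[f(·,x)|F₀] μ(dx) P-almost surely, where the generalized conditional expectation of a nonnegative extended random variable is the a.s. limit of E[f∧n | F₀]. -/
open MeasureTheory Filter Function Set
open scoped ENNReal NNReal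

/-- `g` is (a version of) the generalized conditional expectation of the nonnegative extended
random variable `f` given `m₀` (equivalently, the a.s. limit of `E[f ∧ n | m₀]`): `g` is
`m₀`-measurable and `∫_A f dμ = ∫_A g dμ` for every `m₀`-measurable set `A`. -/
def IsCondExpNN {Ω : Type*} (m₀ : MeasurableSpace Ω) {mΩ : MeasurableSpace Ω}
    (μ : Measure Ω) (f g : Ω → ℝ≥0∞) : Prop :=
  Measurable[m₀] g ∧
    ∀ A : Set Ω, MeasurableSet[m₀] A → ∫⁻ ω in A, f ω ∂μ = ∫⁻ ω in A, g ω ∂μ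

section PureAux

/- Lemmas stated with only one measurable space per type, to avoid instance ambiguity. -/

variable {Ω X : Type*} {m₀ : MeasurableSpace Ω} {mX : MeasurableSpace X}

lemma section_measurable' {h : Ω × X → ℝ≥0∞} (hh : Measurable[m₀.prod mX] h) (x : X) :
    Measurable[m₀] fun ω => h (ω, x) :=
  hh.comp measurable_prodMk_right

lemma sec_set_meas {S : Set (Ω × X)} (hS : MeasurableSet[m₀.prod mX] S) (x : X) :
    MeasurableSet[m₀] ((fun ω => (ω, x)) ⁻¹' S) :=
  measurable_prodMk_right hS

lemma rect_meas {g : Ω → ℝ≥0∞} (hg : Measurable[m₀] g) {B : Set X}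
    (hB : MeasurableSet[mX] B) :
    Measurable[m₀.prod mX] fun p : Ω × X => g p.1 * B.indicator (fun _ => (1 : ℝ≥0∞)) p.2 :=
  (hg.comp measurable_fst).mul ((measurable_const.indicator hB).comp measurable_snd)

lemma lint_ind {μ' : Measure Ω} {A : Set Ω} (hA : MeasurableSet[m₀] A) :
    ∫⁻ ω, A.indicator (fun _ => (1 : ℝ≥0∞)) ω ∂μ' = μ' A := by
  rw [lintegral_indicator hA]
  simp

lemma indicator_section (S : Set (Ω × X)) (x : X) :
    (fun ω => S.indicator (fun _ => (1 : ℝ≥0∞)) (ω, x)) =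
      ((fun ω => (ω, x)) ⁻¹' S).indicator (fun _ => (1 : ℝ≥0∞)) := by
  funext ω
  rfl

end PureAux

section Aux

variable {Ω X : Type*} {m₀ : MeasurableSpace Ω} {m : MeasurableSpace Ω} {μ : Measure Ω}
  [IsProbabilityMeasure μ] {mX : MeasurableSpace X}

lemma setLIntegral_trim_eq' (hm₀ : m₀ ≤ m) {g : Ω → ℝ≥0∞} (hg : Measurable[m₀] g)
    {A : Set Ω} (hA : MeasurableSet[m₀] A) :
    ∫⁻ ω in A, g ω ∂(μ.trim hm₀) = ∫⁻ ω in A, g ω ∂μ := by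
  rw [restrict_trim hm₀ μ hA, lintegral_trim hm₀ hg]

lemma ae_le_of_forall_setLIntegral_le_m₀ (hm₀ : m₀ ≤ m) {g1 g2 : Ω → ℝ≥0∞}
    (hg1 : Measurable[m₀] g1) (hg2 : Measurable[m₀] g2)
    (h : ∀ A : Set Ω, MeasurableSet[m₀] A →
      ∫⁻ ω in A, g1 ω ∂μ ≤ ∫⁻ ω in A, g2 ω ∂μ) : g1 ≤ᵐ[μ] g2 := by
  have htrim : g1 ≤ᵐ[μ.trim hm₀] g2 := by
    refine ae_le_of_forall_setLIntegral_le_of_sigmaFinite (μ := μ.trim hm₀) hg1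
      fun s hs _ => ?_
    rw [setLIntegral_trim_eq' hm₀ hg1 hs, setLIntegral_trim_eq' hm₀ hg2 hs]
    exact h s hs
  exact ae_le_of_ae_le_trim htrim

/-- Existence of a version of the conditional expectation of an indicator. -/
lemma exists_condExpNN_indicator (hm₀ : m₀ ≤ m) {A : Set Ω} (hA : MeasurableSet A) :
    ∃ g : Ω → ℝ≥0∞, Measurable[m₀] g ∧
      ∀ B : Set Ω, MeasurableSet[m₀] B →
        ∫⁻ ω in B, A.indicator (fun _ => (1 : ℝ≥0∞)) ω ∂μ = ∫⁻ ω in B, g ω ∂μ := by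
  have hρπ : (μ.restrict A).trim hm₀ ≪ μ.trim hm₀ := by
    refine Measure.AbsolutelyContinuous.mk fun s hs h0 => ?_
    have h0' : μ s = 0 := by rwa [trim_measurableSet_eq hm₀ hs] at h0
    rw [trim_measurableSet_eq hm₀ hs, Measure.restrict_apply (hm₀ _ hs)]
    exact measure_mono_null inter_subset_left h0'
  set ρ := (μ.restrict A).trim hm₀ with hρdef
  set π := μ.trim hm₀ with hπdef
  refine ⟨ρ.rnDeriv π, Measure.measurable_rnDeriv ρ π, fun B hB => ?_⟩
  have hL : ∫⁻ ω in B, A.indicator (fun _ => (1 : ℝ≥0∞)) ω ∂μ = μ (A ∩ B) := by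
    rw [lint_ind hA]
    exact Measure.restrict_apply hA
  have hR : ∫⁻ ω in B, ρ.rnDeriv π ω ∂μ = μ (B ∩ A) := by
    rw [← setLIntegral_trim_eq' hm₀ (Measure.measurable_rnDeriv ρ π) hB]
    rw [show μ.trim hm₀ = π from rfl, Measure.setLIntegral_rnDeriv hρπ B, hρdef,
      trim_measurableSet_eq hm₀ hB, Measure.restrict_apply (hm₀ _ hB)]
  rw [hL, hR, inter_comm]

/-- Main induction on sets: conditional Fubini for indicators. -/
lemma good_indicator (hm₀ : m₀ ≤ m) :
    ∀ ⦃S : Set (Ω × X)⦄, MeasurableSet[m.prod mX] S →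
      ∃ h : Ω × X → ℝ≥0∞, Measurable[m₀.prod mX] h ∧
        ∀ x : X, IsCondExpNN m₀ μ
          (fun ω => S.indicator (fun _ => (1 : ℝ≥0∞)) (ω, x)) (fun ω => h (ω, x)) := by
  have h_eq : (m.prod mX) = MeasurableSpace.generateFrom
      (Set.image2 (· ×ˢ ·) {s : Set Ω | MeasurableSet[m] s} {t : Set X | MeasurableSet[mX] t}) :=
    generateFrom_prod.symm
  refine MeasurableSpace.induction_on_inter (m := m.prod mX) h_eq isPiSystem_prod ?_ ?_ ?_ ?_
  · -- empty set
    refine ⟨0, measurable_const, fun x => ⟨measurable_const, fun B hB => ?_⟩⟩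
    simp [Set.indicator_empty]
  · -- rectangles
    rintro t ⟨A, hA, B, hB, rfl⟩
    obtain ⟨g, hg, hgint⟩ := exists_condExpNN_indicator (μ := μ) hm₀ hA
    refine ⟨fun p => g p.1 * B.indicator (fun _ => (1 : ℝ≥0∞)) p.2, rect_meas hg hB,
      fun x => ?_⟩
    have hsec : (fun ω => (A ×ˢ B).indicator (fun _ => (1 : ℝ≥0∞)) (ω, x)) =
        fun ω => A.indicator (fun _ => (1 : ℝ≥0∞)) ω * B.indicator (fun _ => (1 : ℝ≥0∞)) x := by
      funext ω
      by_cases hω : ω ∈ A <;> by_cases hx : x ∈ B <;> simp [Set.indicator_apply, hω, hx]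
    rw [hsec]
    by_cases hx : x ∈ B
    · simp only [Set.indicator_of_mem hx, mul_one]
      exact ⟨hg, hgint⟩
    · simp only [Set.indicator_of_notMem hx, mul_zero]
      exact ⟨measurable_const, fun _ _ => rfl⟩
  · -- complement
    rintro S hS ⟨h, hmeas, hx⟩
    refine ⟨fun p => 1 - min (h p) 1, measurable_const.sub (hmeas.min measurable_const), ?_⟩
    intro x
    have hsecS : MeasurableSet ((fun ω => (ω, x)) ⁻¹' S) := sec_set_meas hS x
    have hhm₀ : Measurable[m₀] fun ω => h (ω, x) := section_measurable' hmeas x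
    have hhle : (fun ω => h (ω, x)) ≤ᵐ[μ] fun _ => 1 := by
      refine ae_le_of_forall_setLIntegral_le_m₀ hm₀ hhm₀ measurable_const fun B hB => ?_
      rw [← (hx x).2 B hB, indicator_section, lint_ind hsecS,
        Measure.restrict_apply hsecS, lintegral_one, Measure.restrict_apply_univ]
      exact measure_mono inter_subset_right
    refine ⟨measurable_const.sub (hhm₀.min measurable_const), fun B hB => ?_⟩
    have hL : ∫⁻ ω in B, Sᶜ.indicator (fun _ => (1 : ℝ≥0∞)) (ω, x) ∂μ
        = μ B - μ.restrict B ((fun ω => (ω, x)) ⁻¹' S) := by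
      rw [indicator_section Sᶜ x, Set.preimage_compl, lint_ind hsecS.compl,
        measure_compl hsecS (measure_ne_top (μ.restrict B) _), Measure.restrict_apply_univ]
    have hminm : Measurable fun ω => min (h (ω, x)) 1 :=
      (hhm₀.min (@measurable_const ℝ≥0∞ Ω _ m₀ 1)).mono hm₀ le_rfl
    have hminfin : ∫⁻ ω in B, min (h (ω, x)) 1 ∂μ ≠ ∞ := by
      refine ((lintegral_mono fun ω => min_le_right _ _).trans_lt ?_).ne
      rw [lintegral_one, Measure.restrict_apply_univ]
      exact measure_lt_top μ B
    have hmineq : ∫⁻ ω in B, min (h (ω, x)) 1 ∂μ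
        = μ.restrict B ((fun ω => (ω, x)) ⁻¹' S) := by
      have e : (fun ω => min (h (ω, x)) 1) =ᵐ[μ.restrict B] fun ω => h (ω, x) := by
        filter_upwards [ae_restrict_of_ae hhle] with ω hω
        exact min_eq_left hω
      rw [lintegral_congr_ae e, ← (hx x).2 B hB, indicator_section, lint_ind hsecS]
    have hR : ∫⁻ ω in B, (1 - min (h (ω, x)) 1) ∂μ
        = μ B - μ.restrict B ((fun ω => (ω, x)) ⁻¹' S) := by
      rw [lintegral_sub hminm hminfin (ae_of_all _ fun ω => min_le_right _ _),
        lintegral_one, Measure.restrict_apply_univ, hmineq]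
    rw [hL, hR]
  · -- disjoint unions
    rintro s hdisj hsm hC
    choose h hhm hhx using hC
    refine ⟨fun p => ∑' n, h n p, Measurable.ennreal_tsum hhm, fun x => ?_⟩
    have hsec : ∀ n, MeasurableSet ((fun ω => (ω, x)) ⁻¹' s n) :=
      fun n => sec_set_meas (hsm n) x
    have hsecd : Pairwise (Disjoint on fun n => (fun ω => (ω, x)) ⁻¹' s n) :=
      fun i j hij => (hdisj hij).preimage _
    refine ⟨Measurable.ennreal_tsum fun n => section_measurable' (hhm n) x, fun B hB => ?_⟩
    have hL : ∫⁻ ω in B, (⋃ n, s n).indicator (fun _ => (1 : ℝ≥0∞)) (ω, x) ∂μ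
        = ∑' n, μ.restrict B ((fun ω => (ω, x)) ⁻¹' s n) := by
      rw [indicator_section, show ((fun ω => (ω, x)) ⁻¹' ⋃ n, s n)
          = ⋃ n, (fun ω => (ω, x)) ⁻¹' s n from Set.preimage_iUnion,
        lint_ind (MeasurableSet.iUnion hsec), measure_iUnion hsecd hsec]
    have hR : ∫⁻ ω in B, (∑' n, h n (ω, x)) ∂μ
        = ∑' n, μ.restrict B ((fun ω => (ω, x)) ⁻¹' s n) := by
      rw [lintegral_tsum fun n =>
        ((section_measurable' (hhm n) x).mono hm₀ le_rfl).aemeasurable]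
      congr 1
      funext n
      rw [← (hhx n x).2 B hB, indicator_section, lint_ind (hsec n)]
    rw [hL, hR]

/-- Conditional Fubini pointwise-in-`x` part, for general nonnegative functions. -/
lemma good_fun (hm₀ : m₀ ≤ m) :
    ∀ ⦃f : Ω × X → ℝ≥0∞⦄, Measurable[m.prod mX] f →
      ∃ h : Ω × X → ℝ≥0∞, Measurable[m₀.prod mX] h ∧
        ∀ x : X, IsCondExpNN m₀ μ (fun ω => f (ω, x)) (fun ω => h (ω, x)) := by
  refine Measurable.ennreal_induction (α := Ω × X)
    (motive := fun f => ∃ h : Ω × X → ℝ≥0∞, Measurable[m₀.prod mX] h ∧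
      ∀ x : X, IsCondExpNN m₀ μ (fun ω => f (ω, x)) (fun ω => h (ω, x))) ?_ ?_ ?_
  · -- indicator
    intro c s hs
    obtain ⟨h, hhm, hhx⟩ := good_indicator (μ := μ) hm₀ hs
    refine ⟨fun p => c * h p, hhm.const_mul c, fun x => ?_⟩
    refine ⟨(section_measurable' hhm x).const_mul c, fun B hB => ?_⟩
    have e : (fun ω => s.indicator (fun _ => c) (ω, x)) =
        fun ω => c * s.indicator (fun _ => (1 : ℝ≥0∞)) (ω, x) := by
      funext ω
      by_cases hω : (ω, x) ∈ s <;> simp [Set.indicator_apply, hω]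
    have hsecm : Measurable fun ω => s.indicator (fun _ => (1 : ℝ≥0∞)) (ω, x) := by
      rw [indicator_section]
      exact measurable_const.indicator (sec_set_meas hs x)
    have hhsecm : Measurable fun ω => h (ω, x) :=
      (section_measurable' hhm x).mono hm₀ le_rfl
    rw [e, lintegral_const_mul c hsecm, (hhx x).2 B hB, ← lintegral_const_mul c hhsecm]
  · -- addition
    rintro f g - hfm hgm ⟨hf', hf'm, hf'x⟩ ⟨hg', hg'm, hg'x⟩
    refine ⟨fun p => hf' p + hg' p, hf'm.add hg'm, fun x => ?_⟩
    refine ⟨(section_measurable' hf'm x).add (section_measurable' hg'm x), fun B hB => ?_⟩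
    have h1 : Measurable fun ω => f (ω, x) := hfm.comp measurable_prodMk_right
    have h2 : Measurable fun ω => hf' (ω, x) :=
      (section_measurable' hf'm x).mono hm₀ le_rfl
    calc ∫⁻ ω in B, (f + g) (ω, x) ∂μ
        = (∫⁻ ω in B, f (ω, x) ∂μ) + ∫⁻ ω in B, g (ω, x) ∂μ :=
          lintegral_add_left h1 _
      _ = (∫⁻ ω in B, hf' (ω, x) ∂μ) + ∫⁻ ω in B, hg' (ω, x) ∂μ := by
          rw [(hf'x x).2 B hB, (hg'x x).2 B hB]
      _ = ∫⁻ ω in B, (hf' (ω, x) + hg' (ω, x)) ∂μ :=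
          (lintegral_add_left h2 _).symm
  · -- monotone supremum
    rintro f hfm hfmono hP
    choose H hHm hHx using hP
    refine ⟨fun p => ⨆ n, H n p, Measurable.iSup hHm, fun x => ?_⟩
    have hHsec : ∀ n, Measurable[m₀] fun ω => H n (ω, x) :=
      fun n => section_measurable' (hHm n) x
    have hae : ∀ᵐ ω ∂μ, Monotone fun n => H n (ω, x) := by
      have hstep : ∀ n : ℕ, ∀ᵐ ω ∂μ, H n (ω, x) ≤ H (n + 1) (ω, x) := by
        intro n
        refine ae_le_of_forall_setLIntegral_le_m₀ hm₀ (hHsec n) (hHsec (n + 1))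
          fun B hB => ?_
        rw [← (hHx n x).2 B hB, ← (hHx (n + 1) x).2 B hB]
        exact lintegral_mono fun ω => hfmono (Nat.le_succ n) (ω, x)
      filter_upwards [ae_all_iff.2 hstep] with ω hω
      exact monotone_nat_of_le_succ hω
    refine ⟨Measurable.iSup hHsec, fun B hB => ?_⟩
    have h1 : ∫⁻ ω in B, (⨆ n, f n (ω, x)) ∂μ = ⨆ n, ∫⁻ ω in B, f n (ω, x) ∂μ := by
      refine lintegral_iSup' (fun n => ((hfm n).comp measurable_prodMk_right).aemeasurable) ?_
      exact ae_of_all _ fun ω i j hij => hfmono hij (ω, x)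
    have h2 : ∫⁻ ω in B, (⨆ n, H n (ω, x)) ∂μ = ⨆ n, ∫⁻ ω in B, H n (ω, x) ∂μ := by
      refine lintegral_iSup' (fun n => ((hHsec n).mono hm₀ le_rfl).aemeasurable.restrict) ?_
      exact ae_restrict_of_ae hae
    rw [h1, h2]
    congr 1
    funext n
    exact (hHx n x).2 B hB

end Aux

/-- conditional Fubini for nonnegative functions. Let `(Ω, F, P)` be a
probability space, `F₀ ⊆ F`, `(G, E, ν)` σ-finite, and `f : Ω × G → [0, +∞]` jointly
measurable. Then there is an `F₀⊗E`-measurable `h` such that for every `x`, `h(·,x)` is a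
version of the generalized conditional expectation `E[f(·,x)|F₀]`, and
`E[∫_G f(·,x) ν(dx) | F₀] = ∫_G E[f(·,x)|F₀] ν(dx)` almost surely (expressed by saying that
`ω ↦ ∫_G h(ω,x) ν(dx)` is a version of `E[∫_G f(·,x) ν(dx) | F₀]`). -/
theorem stmt12
    {Ω X : Type*} {m : MeasurableSpace Ω} (μ : Measure Ω) [IsProbabilityMeasure μ]
    (m₀ : MeasurableSpace Ω) (hm₀ : m₀ ≤ m)
    {mX : MeasurableSpace X} (ν : Measure X) [SigmaFinite ν]
    (f : Ω × X → ℝ≥0∞) (hf : @Measurable _ _ (m.prod mX) _ f) :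
    ∃ h : Ω × X → ℝ≥0∞, Measurable[m₀.prod mX] h ∧
      (∀ x : X, IsCondExpNN m₀ μ (fun ω => f (ω, x)) fun ω => h (ω, x)) ∧
      IsCondExpNN m₀ μ (fun ω => ∫⁻ x, f (ω, x) ∂ν)
        (fun ω => ∫⁻ x, h (ω, x) ∂ν) := by
  obtain ⟨h, hhm, hhx⟩ := good_fun (μ := μ) hm₀ hf
  have hle : m₀.prod mX ≤ m.prod mX :=
    sup_le_sup (MeasurableSpace.comap_mono hm₀) le_rfl
  have hhm' : Measurable[m.prod mX] h := hhm.mono hle le_rfl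
  refine ⟨h, hhm, hhx, ?_, ?_⟩
  · exact @Measurable.lintegral_prod_right' Ω X m₀ mX ν _ h hhm
  · intro B hB
    have swapf : ∫⁻ ω in B, ∫⁻ x, f (ω, x) ∂ν ∂μ
        = ∫⁻ x, ∫⁻ ω in B, f (ω, x) ∂μ ∂ν :=
      @lintegral_lintegral_swap Ω X m mX (μ.restrict B) ν _ _
        (fun ω x => f (ω, x)) hf.aemeasurable
    have swaph : ∫⁻ ω in B, ∫⁻ x, h (ω, x) ∂ν ∂μ
        = ∫⁻ x, ∫⁻ ω in B, h (ω, x) ∂μ ∂ν :=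
      @lintegral_lintegral_swap Ω X m mX (μ.restrict B) ν _ _
        (fun ω x => h (ω, x)) hhm'.aemeasurable
    rw [swapf, swaph]
    congr 1
    funext x
    exact (hhx x).2 B hB
end

section
/- The L⁰(F₀)-module L^p_{F₀}(F_T, R^d) := {ξ·x : ξ ∈ L⁰(F₀), x ∈ L^p(F_T, R^d)} coincides with the countable concatenation hull of L^p(F_T, R^d): every element of L^p_{F₀}(F_T, R^d) can be written as Σₙ 1_{Aₙ}·xₙ for a countable F₀-measurable partition (Aₙ) of Ω and a sequence (xₙ) in L^p(F_T, R^d), and conversely every such countable concatenation belongs to L^p_{F₀}(F_T, R^d). -/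
open MeasureTheory Filter Function Set
open scoped ENNReal NNReal

/-- The `L⁰(F₀)`-module `L^p_{F₀}(F_T, ℝᵈ) = {ξ·x : ξ ∈ L⁰(F₀),
x ∈ L^p(F_T, ℝᵈ)}` coincides with the countable concatenation hull of `L^p(F_T, ℝᵈ)`:
every product `ξ·x` agrees, along some countable `F₀`-measurable partition `(Aₙ)` of `Ω`,
with a sequence `(xₙ)` of elements of `L^p(F_T, ℝᵈ)`; and conversely any function glued
from a sequence of `L^p(F_T, ℝᵈ)`-functions along a countable `F₀`-measurable partition is
(a.e.) of the form `ξ·x`. -/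
theorem stmt14
    {Ω : Type*} {m : MeasurableSpace Ω} (μ : Measure Ω) [IsProbabilityMeasure μ]
    (m₀ mT : MeasurableSpace Ω) (h₀T : m₀ ≤ mT) (hTm : mT ≤ m)
    {d : ℕ} (p : ℝ) (hp : 1 ≤ p) :
    (∀ ξ : Ω → ℝ, Measurable[m₀] ξ →
      ∀ x : Ω → EuclideanSpace ℝ (Fin d), Measurable[mT] x →
        (∫⁻ ω, (‖x ω‖₊ : ℝ≥0∞) ^ p ∂μ < ⊤) →
        ∃ A : ℕ → Set Ω, (∀ n, MeasurableSet[m₀] (A n)) ∧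
          Pairwise (Disjoint on A) ∧ (⋃ n, A n) = Set.univ ∧
          ∃ xs : ℕ → Ω → EuclideanSpace ℝ (Fin d),
            (∀ n, Measurable[mT] (xs n) ∧ ∫⁻ ω, (‖xs n ω‖₊ : ℝ≥0∞) ^ p ∂μ < ⊤) ∧
            ∀ n, ∀ ω ∈ A n, ξ ω • x ω = xs n ω) ∧
    (∀ A : ℕ → Set Ω, (∀ n, MeasurableSet[m₀] (A n)) →
      Pairwise (Disjoint on A) → (⋃ n, A n) = Set.univ →
      ∀ xs : ℕ → Ω → EuclideanSpace ℝ (Fin d),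
        (∀ n, Measurable[mT] (xs n) ∧ ∫⁻ ω, (‖xs n ω‖₊ : ℝ≥0∞) ^ p ∂μ < ⊤) →
        ∀ V : Ω → EuclideanSpace ℝ (Fin d), (∀ n, ∀ ω ∈ A n, V ω = xs n ω) →
        ∃ ξ : Ω → ℝ, ∃ x : Ω → EuclideanSpace ℝ (Fin d),
          Measurable[m₀] ξ ∧ Measurable[mT] x ∧
          (∫⁻ ω, (‖x ω‖₊ : ℝ≥0∞) ^ p ∂μ < ⊤) ∧
          ∀ᵐ ω ∂μ, V ω = ξ ω • x ω) := by
  classical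
  have hp0 : (0:ℝ) ≤ p := le_trans zero_le_one hp
  constructor
  · -- forward direction
    intro ξ hξ x hx hxLp
    have habs : Measurable[m₀] fun ω => ‖ξ ω‖ := measurable_norm.comp hξ
    refine ⟨fun n => (fun ω => ‖ξ ω‖) ⁻¹' Set.Ico (n:ℝ) (n+1), ?_, ?_, ?_, ?_⟩
    · intro n
      exact habs measurableSet_Ico
    · intro i j hij
      refine Set.disjoint_left.2 (fun ω hi hj => ?_)
      simp only [Set.mem_preimage, Set.mem_Ico] at hi hj
      rcases lt_or_gt_of_ne hij with h | h
      · have : ((i:ℝ)+1) ≤ (j:ℝ) := by exact_mod_cast Nat.succ_le_of_lt h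
        linarith [hi.2, hj.1]
      · have : ((j:ℝ)+1) ≤ (i:ℝ) := by exact_mod_cast Nat.succ_le_of_lt h
        linarith [hi.1, hj.2]
    · ext ω
      simp only [Set.mem_iUnion, Set.mem_preimage, Set.mem_Ico, Set.mem_univ, iff_true]
      exact ⟨⌊‖ξ ω‖⌋₊, Nat.floor_le (abs_nonneg _), Nat.lt_floor_add_one _⟩
    · refine ⟨fun n => ((fun ω => ‖ξ ω‖) ⁻¹' Set.Ico (n:ℝ) (n+1)).indicator
        (fun ω => ξ ω • x ω), ?_, ?_⟩
      · intro n
        have hAs : MeasurableSet[mT] ((fun ω => ‖ξ ω‖) ⁻¹' Set.Ico (n:ℝ) (n+1)) :=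
          h₀T _ (habs measurableSet_Ico)
        have hmeas : Measurable[mT] fun ω => ξ ω • x ω := (hξ.mono h₀T le_rfl).smul hx
        refine ⟨hmeas.indicator hAs, ?_⟩
        have hbd : ∀ ω, (‖(((fun ω => ‖ξ ω‖) ⁻¹' Set.Ico (n:ℝ) (n+1)).indicator
            (fun ω => ξ ω • x ω)) ω‖₊ : ℝ≥0∞) ^ p
            ≤ (((n:ℝ≥0∞)+1) * ‖x ω‖₊) ^ p := by
          intro ω
          refine ENNReal.rpow_le_rpow ?_ hp0
          by_cases hω : ω ∈ (fun ω => ‖ξ ω‖) ⁻¹' Set.Ico (n:ℝ) (n+1)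
          · rw [Set.indicator_of_mem hω]
            rw [nnnorm_smul, ENNReal.coe_mul]
            refine mul_le_mul_left ?_ _
            have h1 : ‖ξ ω‖₊ ≤ ((n:ℝ≥0)+1) := by
              rw [← NNReal.coe_le_coe, coe_nnnorm]
              push_cast
              exact le_of_lt hω.2
            calc (‖ξ ω‖₊ : ℝ≥0∞) ≤ (((n:ℝ≥0)+1 : ℝ≥0) : ℝ≥0∞) := ENNReal.coe_le_coe.2 h1
              _ = (n:ℝ≥0∞)+1 := by push_cast; ring
          · rw [Set.indicator_of_notMem hω]
            simp
        calc ∫⁻ ω, (‖(((fun ω => ‖ξ ω‖) ⁻¹' Set.Ico (n:ℝ) (n+1)).indicator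
              (fun ω => ξ ω • x ω)) ω‖₊ : ℝ≥0∞) ^ p ∂μ
            ≤ ∫⁻ ω, (((n:ℝ≥0∞)+1) * ‖x ω‖₊) ^ p ∂μ := lintegral_mono hbd
          _ = ∫⁻ ω, ((n:ℝ≥0∞)+1) ^ p * (‖x ω‖₊ : ℝ≥0∞) ^ p ∂μ := by
              simp_rw [ENNReal.mul_rpow_of_nonneg _ _ hp0]
          _ = ((n:ℝ≥0∞)+1) ^ p * ∫⁻ ω, (‖x ω‖₊ : ℝ≥0∞) ^ p ∂μ :=
              lintegral_const_mul' _ _ (ENNReal.rpow_ne_top_of_nonneg hp0 (by simp))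
          _ < ⊤ := ENNReal.mul_lt_top
              (ENNReal.rpow_lt_top_of_nonneg hp0 (by simp)) hxLp
      · intro n ω hω
        show ξ ω • x ω = Set.indicator _ (fun ω => ξ ω • x ω) ω
        exact (Set.indicator_of_mem hω (fun ω => ξ ω • x ω)).symm
  · -- converse direction
    intro A hA hdis hcov xs hxs V hV
    have hex : ∀ ω, ∃ n, ω ∈ A n := by
      intro ω
      have := Set.eq_univ_iff_forall.1 hcov ω
      simpa using this
    set f : Ω → ℕ := fun ω => Nat.find (hex ω) with hf
    have hfA : ∀ ω, ω ∈ A (f ω) := fun ω => Nat.find_spec (hex ω)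
    have hfiber : ∀ n, f ⁻¹' {n} = A n := by
      intro n
      ext ω
      simp only [Set.mem_preimage, Set.mem_singleton_iff]
      constructor
      · rintro rfl; exact hfA ω
      · intro hω
        by_contra hne
        exact Set.disjoint_left.1 (hdis (Ne.symm hne)) hω (hfA ω)
    have hfmeas : Measurable[m₀] f := by
      refine @measurable_to_nat Ω m₀ f ?_
      intro ω
      rw [hfiber]
      exact hA _
    -- weights
    set I : ℕ → ℝ≥0∞ := fun n => ∫⁻ ω, (‖xs n ω‖₊ : ℝ≥0∞) ^ p ∂μ with hI
    set c : ℕ → ℝ≥0 := fun n => max 1 (2 ^ n * ((I n).toNNReal + 1)) with hc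
    have hc1 : ∀ n, (1:ℝ≥0) ≤ c n := fun n => le_max_left _ _
    have hcpos : ∀ n, (0:ℝ) < (c n : ℝ) := fun n => by
      exact_mod_cast lt_of_lt_of_le zero_lt_one (hc1 n)
    refine ⟨fun ω => ((c (f ω) : ℝ≥0) : ℝ),
      fun ω => ((c (f ω) : ℝ))⁻¹ • xs (f ω) ω, ?_, ?_, ?_, ?_⟩
    · exact (measurable_from_top (f := fun n : ℕ => ((c n : ℝ≥0) : ℝ))).comp hfmeas
    · -- measurability of x
      intro s hs
      have heq : (fun ω => ((c (f ω) : ℝ))⁻¹ • xs (f ω) ω) ⁻¹' s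
          = ⋃ n, A n ∩ (fun ω => ((c n : ℝ))⁻¹ • xs n ω) ⁻¹' s := by
        ext ω
        simp only [Set.mem_preimage, Set.mem_iUnion, Set.mem_inter_iff]
        constructor
        · intro h
          exact ⟨f ω, hfA ω, h⟩
        · rintro ⟨n, hn, hns⟩
          have : f ω = n := by rw [← hfiber n] at hn; exact hn
          rwa [this]
      rw [heq]
      refine MeasurableSet.iUnion (fun n => (h₀T _ (hA n)).inter ?_)
      exact (show Measurable[mT] (fun ω => ((c n : ℝ))⁻¹ • xs n ω) from (measurable_const (a := ((c n : ℝ))⁻¹)).smul (hxs n).1) hs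
    · -- integrability
      have hAm : ∀ n, MeasurableSet[m] (A n) := fun n => hTm _ (h₀T _ (hA n))
      have hsplit : ∫⁻ ω, (‖((c (f ω) : ℝ))⁻¹ • xs (f ω) ω‖₊ : ℝ≥0∞) ^ p ∂μ
          = ∑' n, ∫⁻ ω in A n, (‖((c (f ω) : ℝ))⁻¹ • xs (f ω) ω‖₊ : ℝ≥0∞) ^ p ∂μ := by
        rw [← setLIntegral_univ, ← hcov, lintegral_iUnion hAm hdis]
      rw [hsplit]
      have hbound : ∀ n, ∫⁻ ω in A n, (‖((c (f ω) : ℝ))⁻¹ • xs (f ω) ω‖₊ : ℝ≥0∞) ^ p ∂μ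
          ≤ ((2:ℝ≥0∞)⁻¹) ^ n := by
        intro n
        have hfn : ∀ ω ∈ A n, f ω = n := by
          intro ω hω; rw [← hfiber n] at hω; exact hω
        have h1 : ∫⁻ ω in A n, (‖((c (f ω) : ℝ))⁻¹ • xs (f ω) ω‖₊ : ℝ≥0∞) ^ p ∂μ
            = ∫⁻ ω in A n, ((c n : ℝ≥0∞))⁻¹ ^ p * (‖xs n ω‖₊ : ℝ≥0∞) ^ p ∂μ := by
          refine setLIntegral_congr_fun (hAm n) ?_
          intro ω hω
          dsimp only
          rw [hfn ω hω, nnnorm_smul, ENNReal.coe_mul,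
            ENNReal.mul_rpow_of_nonneg _ _ hp0]
          congr 2
          have hnn : ‖((c n : ℝ))⁻¹‖₊ = (c n)⁻¹ := by
            apply NNReal.coe_injective
            rw [coe_nnnorm, Real.norm_eq_abs,
              abs_of_nonneg (le_of_lt (inv_pos.2 (hcpos n))), NNReal.coe_inv]
          rw [hnn, ENNReal.coe_inv (by exact_mod_cast (hcpos n).ne')]
        rw [h1, lintegral_const_mul' _ _ (ENNReal.rpow_ne_top_of_nonneg hp0
          (ENNReal.inv_ne_top.2 (by exact_mod_cast (hcpos n).ne')))]
        have h2 : ∫⁻ ω in A n, (‖xs n ω‖₊ : ℝ≥0∞) ^ p ∂μ ≤ I n :=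
          setLIntegral_le_lintegral _ _
        have h3 : ((c n : ℝ≥0∞))⁻¹ ^ p ≤ ((c n : ℝ≥0∞))⁻¹ := by
          calc ((c n : ℝ≥0∞))⁻¹ ^ p ≤ ((c n : ℝ≥0∞))⁻¹ ^ (1:ℝ) :=
                ENNReal.rpow_le_rpow_of_exponent_ge
                  (ENNReal.inv_le_one.2 (by exact_mod_cast hc1 n)) hp
            _ = ((c n : ℝ≥0∞))⁻¹ := ENNReal.rpow_one _
        calc ((c n : ℝ≥0∞))⁻¹ ^ p * ∫⁻ ω in A n, (‖xs n ω‖₊ : ℝ≥0∞) ^ p ∂μ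
            ≤ ((c n : ℝ≥0∞))⁻¹ * I n := mul_le_mul' h3 h2
          _ ≤ ((2:ℝ≥0∞)⁻¹) ^ n := by
              rw [ENNReal.inv_mul_le_iff (by exact_mod_cast (hcpos n).ne')
                ENNReal.coe_ne_top]
              have hIfin : I n ≠ ⊤ := ((hxs n).2).ne
              have hIle : I n ≤ ((I n).toNNReal : ℝ≥0∞) + 1 := by
                rw [ENNReal.coe_toNNReal hIfin]
                exact le_self_add
              have hcge : ((2:ℝ≥0∞)) ^ n * (((I n).toNNReal : ℝ≥0∞) + 1)
                  ≤ (c n : ℝ≥0∞) := by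
                have : ((2:ℝ≥0)) ^ n * ((I n).toNNReal + 1) ≤ c n := le_max_right _ _
                calc ((2:ℝ≥0∞)) ^ n * (((I n).toNNReal : ℝ≥0∞) + 1)
                    = (((2:ℝ≥0) ^ n * ((I n).toNNReal + 1) : ℝ≥0) : ℝ≥0∞) := by
                      push_cast; ring
                  _ ≤ (c n : ℝ≥0∞) := ENNReal.coe_le_coe.2 this
              calc I n ≤ ((I n).toNNReal : ℝ≥0∞) + 1 := hIle
                _ = ((2:ℝ≥0∞)) ^ n * (((I n).toNNReal : ℝ≥0∞) + 1) * ((2:ℝ≥0∞)⁻¹) ^ n := by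
                    rw [mul_comm ((2:ℝ≥0∞) ^ n), mul_assoc, ← mul_pow,
                      ENNReal.mul_inv_cancel (by norm_num) (by norm_num), one_pow, mul_one]
                _ ≤ (c n : ℝ≥0∞) * ((2:ℝ≥0∞)⁻¹) ^ n := mul_le_mul_left hcge _
      calc (∑' n, ∫⁻ ω in A n, (‖((c (f ω) : ℝ))⁻¹ • xs (f ω) ω‖₊ : ℝ≥0∞) ^ p ∂μ)
          ≤ ∑' n : ℕ, ((2:ℝ≥0∞)⁻¹) ^ n := ENNReal.tsum_le_tsum hbound
        _ = (1 - 2⁻¹)⁻¹ := ENNReal.tsum_geometric _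
        _ < ⊤ := by
            rw [ENNReal.one_sub_inv_two, inv_inv]
            exact Ne.lt_top (by simp)
    · -- a.e. equality (in fact everywhere)
      refine Filter.Eventually.of_forall (fun ω => ?_)
      rw [hV (f ω) ω (hfA ω), smul_smul, mul_inv_cancel₀ (hcpos (f ω)).ne', one_smul]
end

section
/- Dual characterization of the conditional p-norm: for 1 < p < ∞, q = p/(p−1), and x ∈ L^p_{F₀}(F_T), one has E[|x|^p | F₀]^{1/p} = ess sup {|E[xy | F₀]| : y ∈ L^q_{F₀}(F_T), E[|y|^q | F₀]^{1/q} ≤ 1}. -/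
open MeasureTheory Filter Function Set
open scoped ENNReal NNReal

/-- Conditional integrability (σ-integrability) of a nonnegative extended random variable. -/
def CondIntegrable {Ω : Type*} {mΩ : MeasurableSpace Ω} (μ : Measure Ω)
    (m₀ : MeasurableSpace Ω) (f : Ω → ℝ≥0∞) : Prop :=
  ∃ η : Ω → ℝ, Measurable[m₀] η ∧ (∀ ω, 0 < η ω) ∧
    ∫⁻ ω, ENNReal.ofReal (η ω) * f ω ∂μ < ⊤

/-- `g` is a version of the generalized conditional expectation of the real random variable
`f` given `m₀`. -/
def IsCondExpR {Ω : Type*} (m₀ : MeasurableSpace Ω) {mΩ : MeasurableSpace Ω}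
    (μ : Measure Ω) (f g : Ω → ℝ) : Prop :=
  Measurable[m₀] g ∧
    ∀ A : Set Ω, MeasurableSet[m₀] A → IntegrableOn f A μ →
      IntegrableOn g A μ ∧ ∫ ω in A, f ω ∂μ = ∫ ω in A, g ω ∂μ

namespace Stmt17Aux

lemma setLIntegral_trim' {Ω : Type*} {m m₀ : MeasurableSpace Ω} (μ : @Measure Ω m)
    (h₀ : m₀ ≤ m) {g : Ω → ℝ≥0∞}
    (hg : Measurable[m₀] g) {A : Set Ω} (hA : MeasurableSet[m₀] A) :
    ∫⁻ ω in A, g ω ∂(μ.trim h₀) = ∫⁻ ω in A, g ω ∂μ := by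
  rw [← lintegral_indicator hA, lintegral_trim h₀ (hg.indicator hA),
    lintegral_indicator (h₀ _ hA)]

/-- Uniqueness of versions. -/
lemma version_unique {Ω : Type*} {m m₀ : MeasurableSpace Ω} {μ : @Measure Ω m}
    (h₀ : m₀ ≤ m) [IsFiniteMeasure μ] {g₁ g₂ : Ω → ℝ≥0∞}
    (hg₁ : Measurable[m₀] g₁) (hg₂ : Measurable[m₀] g₂)
    (h : ∀ A : Set Ω, MeasurableSet[m₀] A → ∫⁻ ω in A, g₁ ω ∂μ = ∫⁻ ω in A, g₂ ω ∂μ) :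
    g₁ =ᵐ[μ] g₂ := by
  haveI : IsFiniteMeasure (μ.trim h₀) := isFiniteMeasure_trim h₀
  refine ae_of_ae_trim h₀ ?_
  refine ae_eq_of_forall_setLIntegral_eq_of_sigmaFinite hg₁ hg₂ fun s hs _ => ?_
  rw [setLIntegral_trim' μ h₀ hg₁ hs, setLIntegral_trim' μ h₀ hg₂ hs]
  exact h s hs

/-- Pull-out property of the conditional expectation identity, lintegral form. -/
lemma pullout {Ω : Type*} {m m₀ : MeasurableSpace Ω} {μ : @Measure Ω m}
    (h₀ : m₀ ≤ m) {f g w : Ω → ℝ≥0∞} (hf : Measurable[m] f)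
    (hg : Measurable[m₀] g) (hw : Measurable[m₀] w)
    (hfg : ∀ A : Set Ω, MeasurableSet[m₀] A → ∫⁻ ω in A, f ω ∂μ = ∫⁻ ω in A, g ω ∂μ)
    {A : Set Ω} (hA : MeasurableSet[m₀] A) :
    ∫⁻ ω in A, w ω * f ω ∂μ = ∫⁻ ω in A, w ω * g ω ∂μ := by
  have hgm : Measurable[m] g := hg.mono h₀ le_rfl
  have hwm : Measurable[m] w := hw.mono h₀ le_rfl
  have htrim : (μ.withDensity f).trim h₀ = (μ.withDensity g).trim h₀ := by
    refine Measure.ext fun s hs => ?_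
    rw [trim_measurableSet_eq h₀ hs, trim_measurableSet_eq h₀ hs,
      withDensity_apply _ (h₀ _ hs), withDensity_apply _ (h₀ _ hs)]
    exact hfg s hs
  have key : ∀ (f : Ω → ℝ≥0∞), Measurable[m] f →
      ∫⁻ ω in A, w ω * f ω ∂μ = ∫⁻ ω, A.indicator w ω ∂((μ.withDensity f).trim h₀) := by
    intro f hf
    calc ∫⁻ ω in A, w ω * f ω ∂μ = ∫⁻ ω, f ω * w ω ∂(μ.restrict A) :=
          lintegral_congr fun ω => mul_comm _ _
      _ = ∫⁻ ω, w ω ∂((μ.restrict A).withDensity f) :=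
          (lintegral_withDensity_eq_lintegral_mul (μ.restrict A) hf hwm).symm
      _ = ∫⁻ ω, w ω ∂((μ.withDensity f).restrict A) := by
          rw [restrict_withDensity (h₀ _ hA)]
      _ = ∫⁻ ω, A.indicator w ω ∂(μ.withDensity f) :=
          (lintegral_indicator (h₀ _ hA) w).symm
      _ = ∫⁻ ω, A.indicator w ω ∂((μ.withDensity f).trim h₀) :=
          (lintegral_trim h₀ (hw.indicator hA)).symm
  rw [key f hf, key g hgm, htrim]

/-- A conditionally integrable function has an a.e. finite conditional expectation version. -/
lemma version_ae_lt_top {Ω : Type*} {m m₀ : MeasurableSpace Ω} {μ : @Measure Ω m}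
    (h₀ : m₀ ≤ m) {f g : Ω → ℝ≥0∞}
    (hfi : CondIntegrable μ m₀ f)
    (hg : ∀ A : Set Ω, MeasurableSet[m₀] A → ∫⁻ ω in A, f ω ∂μ = ∫⁻ ω in A, g ω ∂μ)
    (hgm : Measurable[m₀] g) :
    ∀ᵐ ω ∂μ, g ω < ∞ := by
  obtain ⟨η, hη, hηpos, hηint⟩ := hfi
  set A : ℕ → Set Ω := fun n => {ω | 1 / ((n : ℝ) + 1) < η ω} with hA
  have hAmeas : ∀ n, MeasurableSet[m₀] (A n) := fun n =>
    measurableSet_lt measurable_const hη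
  have hcover : ∀ ω, ∃ n, ω ∈ A n := fun ω => exists_nat_one_div_lt (hηpos ω)
  have hfin : ∀ n, ∫⁻ ω in A n, g ω ∂μ < ∞ := by
    intro n
    rw [← hg _ (hAmeas n)]
    have hle : ∀ ω ∈ A n, f ω ≤ ((n : ℝ≥0∞) + 1) * (ENNReal.ofReal (η ω) * f ω) := by
      intro ω hω
      have h1 : (1 : ℝ≥0∞) ≤ ((n : ℝ≥0∞) + 1) * ENNReal.ofReal (η ω) := by
        have h2 : ENNReal.ofReal (1 / ((n : ℝ) + 1)) ≤ ENNReal.ofReal (η ω) :=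
          ENNReal.ofReal_le_ofReal (le_of_lt hω)
        have hne : ((n : ℝ≥0∞) + 1) ≠ 0 := by simp
        have hnt : ((n : ℝ≥0∞) + 1) ≠ ∞ := by simp
        calc (1 : ℝ≥0∞) = ((n : ℝ≥0∞) + 1) * ((n : ℝ≥0∞) + 1)⁻¹ :=
              (ENNReal.mul_inv_cancel hne hnt).symm
          _ ≤ ((n : ℝ≥0∞) + 1) * ENNReal.ofReal (η ω) := by
              refine mul_le_mul_right ?_ _
              rw [one_div, ENNReal.ofReal_inv_of_pos (by positivity)] at h2
              calc ((n : ℝ≥0∞) + 1)⁻¹ = (ENNReal.ofReal ((n : ℝ) + 1))⁻¹ := by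
                    simp [ENNReal.ofReal_add, ENNReal.ofReal_natCast]
                _ ≤ ENNReal.ofReal (η ω) := h2
      calc f ω = 1 * f ω := (one_mul _).symm
        _ ≤ (((n : ℝ≥0∞) + 1) * ENNReal.ofReal (η ω)) * f ω :=
            mul_le_mul_left h1 _
        _ = ((n : ℝ≥0∞) + 1) * (ENNReal.ofReal (η ω) * f ω) := by ring
    calc ∫⁻ ω in A n, f ω ∂μ
        ≤ ∫⁻ ω in A n, ((n : ℝ≥0∞) + 1) * (ENNReal.ofReal (η ω) * f ω) ∂μ :=
          setLIntegral_mono' (h₀ _ (hAmeas n)) hle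
      _ ≤ ((n : ℝ≥0∞) + 1) * ∫⁻ ω, ENNReal.ofReal (η ω) * f ω ∂μ := by
          rw [lintegral_const_mul' _ _ (by simp)]
          exact mul_le_mul_right (setLIntegral_le_lintegral _ _) _
      _ < ∞ := ENNReal.mul_lt_top (by simp) hηint
  have hn : ∀ n, ∀ᵐ ω ∂μ, ω ∈ A n → g ω < ∞ := by
    intro n
    have h3 := ae_lt_top (hgm.mono h₀ le_rfl) (hfin n).ne
    exact (ae_restrict_iff' (h₀ _ (hAmeas n))).mp h3
  rw [← ae_all_iff] at hn
  filter_upwards [hn] with ω hω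
  obtain ⟨n, hn'⟩ := hcover ω
  exact hω n hn'

end Stmt17Aux

namespace Stmt17Aux2
open Stmt17Aux

variable {Ω : Type*} {m m₀ : MeasurableSpace Ω}

/-- Exhaustion by sets of finite integral. -/
lemma condInt_exhaustion {μ : @Measure Ω m} (h₀ : m₀ ≤ m) {f : Ω → ℝ≥0∞}
    (hfi : CondIntegrable μ m₀ f) :
    ∃ A : ℕ → Set Ω, Monotone A ∧ (∀ n, MeasurableSet[m₀] (A n)) ∧ (∀ ω, ∃ n, ω ∈ A n) ∧
      (∀ n, ∫⁻ ω in A n, f ω ∂μ < ∞) := by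
  obtain ⟨η, hη, hηpos, hηint⟩ := hfi
  refine ⟨fun n => {ω | 1 / ((n : ℝ) + 1) < η ω}, ?_, fun n =>
    measurableSet_lt measurable_const hη, fun ω => exists_nat_one_div_lt (hηpos ω), fun n => ?_⟩
  · intro a b hab ω hω
    have hpos : (0:ℝ) < (a:ℝ) + 1 := by positivity
    refine lt_of_le_of_lt (one_div_le_one_div_of_le hpos ?_) hω
    have : ((a : ℝ) + 1) ≤ ((b : ℝ) + 1) := by
      have h9 : ((a:ℝ)) ≤ (b:ℝ) := Nat.cast_le.2 hab
      linarith
    exact this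
  have hle : ∀ ω ∈ {ω | 1 / ((n : ℝ) + 1) < η ω},
      f ω ≤ ((n : ℝ≥0∞) + 1) * (ENNReal.ofReal (η ω) * f ω) := by
    intro ω hω
    have h1 : (1 : ℝ≥0∞) ≤ ((n : ℝ≥0∞) + 1) * ENNReal.ofReal (η ω) := by
      have h2 : ENNReal.ofReal (1 / ((n : ℝ) + 1)) ≤ ENNReal.ofReal (η ω) :=
        ENNReal.ofReal_le_ofReal (le_of_lt hω)
      have hne : ((n : ℝ≥0∞) + 1) ≠ 0 := by simp
      have hnt : ((n : ℝ≥0∞) + 1) ≠ ∞ := by simp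
      calc (1 : ℝ≥0∞) = ((n : ℝ≥0∞) + 1) * ((n : ℝ≥0∞) + 1)⁻¹ :=
            (ENNReal.mul_inv_cancel hne hnt).symm
        _ ≤ ((n : ℝ≥0∞) + 1) * ENNReal.ofReal (η ω) := by
            refine mul_le_mul_right ?_ _
            rw [one_div, ENNReal.ofReal_inv_of_pos (by positivity)] at h2
            calc ((n : ℝ≥0∞) + 1)⁻¹ = (ENNReal.ofReal ((n : ℝ) + 1))⁻¹ := by
                  simp [ENNReal.ofReal_add, ENNReal.ofReal_natCast]
              _ ≤ ENNReal.ofReal (η ω) := h2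
    calc f ω = 1 * f ω := (one_mul _).symm
      _ ≤ (((n : ℝ≥0∞) + 1) * ENNReal.ofReal (η ω)) * f ω := mul_le_mul_left h1 _
      _ = ((n : ℝ≥0∞) + 1) * (ENNReal.ofReal (η ω) * f ω) := by ring
  calc ∫⁻ ω in {ω | 1 / ((n : ℝ) + 1) < η ω}, f ω ∂μ
      ≤ ∫⁻ ω in {ω | 1 / ((n : ℝ) + 1) < η ω},
          ((n : ℝ≥0∞) + 1) * (ENNReal.ofReal (η ω) * f ω) ∂μ :=
        setLIntegral_mono' (h₀ _ (measurableSet_lt measurable_const hη)) hle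
    _ ≤ ((n : ℝ≥0∞) + 1) * ∫⁻ ω, ENNReal.ofReal (η ω) * f ω ∂μ := by
        rw [lintegral_const_mul' _ _ (by simp)]
        exact mul_le_mul_right (setLIntegral_le_lintegral _ _) _
    _ < ∞ := ENNReal.mul_lt_top (by simp) hηint

/-- Existence of a version of the generalized conditional expectation. -/
lemma exists_version {μ : @Measure Ω m} [IsProbabilityMeasure μ] (h₀ : m₀ ≤ m)
    {f : Ω → ℝ≥0∞} (hf : Measurable[m] f) (hfi : CondIntegrable μ m₀ f) :
    ∃ g : Ω → ℝ≥0∞, IsCondExpNN m₀ μ f g := by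
  obtain ⟨A, -, hAmeas, hcover, hfin⟩ := condInt_exhaustion h₀ hfi
  set ν : @Measure Ω m₀ := (μ.withDensity f).trim h₀ with hν
  set ρ : @Measure Ω m₀ := μ.trim h₀ with hρ
  haveI : IsFiniteMeasure ρ := isFiniteMeasure_trim h₀
  haveI : SigmaFinite ν := by
    refine ⟨⟨⟨fun n => A n, fun _ => trivial, fun n => ?_, ?_⟩⟩⟩
    · rw [hν, trim_measurableSet_eq h₀ (hAmeas n), withDensity_apply _ (h₀ _ (hAmeas n))]
      exact hfin n
    · exact Set.eq_univ_of_forall fun ω => Set.mem_iUnion.2 (hcover ω)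
  have hac : ν ≪ ρ := by
    refine Measure.AbsolutelyContinuous.mk fun s hs hs0 => ?_
    rw [hρ, trim_measurableSet_eq h₀ hs] at hs0
    rw [hν, trim_measurableSet_eq h₀ hs, withDensity_apply _ (h₀ _ hs)]
    exact setLIntegral_measure_zero _ _ hs0
  refine ⟨ν.rnDeriv ρ, Measure.measurable_rnDeriv ν ρ, fun B hB => ?_⟩
  have h1 : ∫⁻ ω in B, ν.rnDeriv ρ ω ∂μ = ∫⁻ ω in B, ν.rnDeriv ρ ω ∂ρ :=
    (setLIntegral_trim' μ h₀ (Measure.measurable_rnDeriv ν ρ) hB).symm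
  rw [h1, Measure.setLIntegral_rnDeriv hac B, hν, trim_measurableSet_eq h₀ hB,
    withDensity_apply _ (h₀ _ hB)]

/-- Weighted Young inequality in `ℝ≥0∞`. -/
lemma young_weighted {p q : ℝ} (hpq : Real.HolderConjugate p q) (a b w : ℝ≥0∞)
    (hw0 : w ≠ 0) (hwt : w ≠ ∞) :
    a * b ≤ (w * a ^ p) / ENNReal.ofReal p + (w ^ (-(q / p)) * b ^ q) / ENNReal.ofReal q := by
  have h1 : a * b = (w ^ (1 / p) * a) * (w ^ (-(1 / p)) * b) := by
    have h2 : w ^ ((1:ℝ) / p) * w ^ (-(1 / p) : ℝ) = 1 := by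
      rw [← ENNReal.rpow_add _ _ hw0 hwt]; simp
    calc a * b = (w ^ ((1:ℝ) / p) * w ^ (-(1 / p) : ℝ)) * (a * b) := by rw [h2, one_mul]
      _ = _ := by ring
  have h3 : (w ^ ((1:ℝ) / p) * a) ^ p = w * a ^ p := by
    rw [ENNReal.mul_rpow_of_nonneg _ _ hpq.nonneg, ← ENNReal.rpow_mul, one_div,
      inv_mul_cancel₀ hpq.ne_zero, ENNReal.rpow_one]
  have h4 : (w ^ (-(1 / p) : ℝ) * b) ^ q = w ^ (-(q / p)) * b ^ q := by
    rw [ENNReal.mul_rpow_of_nonneg _ _ hpq.symm.nonneg, ← ENNReal.rpow_mul]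
    ring_nf
  calc a * b = (w ^ ((1:ℝ) / p) * a) * (w ^ (-(1 / p) : ℝ) * b) := h1
    _ ≤ (w ^ ((1:ℝ) / p) * a) ^ p / ENNReal.ofReal p
        + (w ^ (-(1 / p) : ℝ) * b) ^ q / ENNReal.ofReal q :=
      ENNReal.young_inequality _ _ hpq
    _ = _ := by rw [h3, h4]

/-- On the set where the conditional expectation vanishes, the function vanishes a.e. -/
lemma ae_zero_on_zero_set {μ : @Measure Ω m} (h₀ : m₀ ≤ m) {f g : Ω → ℝ≥0∞}
    (hf : Measurable[m] f) (hg : IsCondExpNN m₀ μ f g) :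
    ∀ᵐ ω ∂μ, g ω = 0 → f ω = 0 := by
  have hS : MeasurableSet[m₀] {ω | g ω = 0} := hg.1 (measurableSet_singleton 0)
  have h1 : ∫⁻ ω in {ω | g ω = 0}, f ω ∂μ = 0 := by
    rw [hg.2 _ hS]
    rw [setLIntegral_congr_fun (h₀ _ hS) fun ω hω => hω]
    simp
  have h2 := (lintegral_eq_zero_iff (hf.mono le_rfl le_rfl)).mp h1
  have h3 := (ae_restrict_iff' (h₀ _ hS)).mp h2
  filter_upwards [h3] with ω hω h0 using hω h0

end Stmt17Aux2

namespace Stmt17Aux3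
open Stmt17Aux Stmt17Aux2

variable {Ω : Type*} {m m₀ : MeasurableSpace Ω}

lemma ofReal_abs_eq_nnnorm (r : ℝ) : ENNReal.ofReal |r| = (‖r‖₊ : ℝ≥0∞) := by
  rw [← Real.norm_eq_abs, ofReal_norm, enorm_eq_nnnorm]

/-- Conditional Hölder inequality in lintegral form over `m₀`-measurable sets. -/
lemma holder_core {μ : @Measure Ω m} [IsProbabilityMeasure μ] (h₀ : m₀ ≤ m)
    {p q : ℝ} (hpq : Real.HolderConjugate p q) {x y : Ω → ℝ}
    (hx : Measurable[m] x) (hy : Measurable[m] y)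
    {nx ny : Ω → ℝ≥0∞} (hnx : IsCondExpNN m₀ μ (fun ω => (‖x ω‖₊ : ℝ≥0∞) ^ p) nx)
    (hny : IsCondExpNN m₀ μ (fun ω => (‖y ω‖₊ : ℝ≥0∞) ^ q) ny)
    {A : Set Ω} (hA : MeasurableSet[m₀] A) :
    ∫⁻ ω in A, ENNReal.ofReal |x ω * y ω| ∂μ ≤ ∫⁻ ω in A, nx ω ^ (1/p) * ny ω ^ (1/q) ∂μ := by
  classical
  have hxm : Measurable[m] fun ω => (‖x ω‖₊ : ℝ≥0∞) ^ p :=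
    (ENNReal.continuous_rpow_const.measurable).comp
      (measurable_coe_nnreal_ennreal.comp (measurable_nnnorm.comp hx))
  have hym : Measurable[m] fun ω => (‖y ω‖₊ : ℝ≥0∞) ^ q :=
    (ENNReal.continuous_rpow_const.measurable).comp
      (measurable_coe_nnreal_ennreal.comp (measurable_nnnorm.comp hy))
  -- decompose A into three pieces
  set S0 : Set Ω := {ω | nx ω = 0 ∨ ny ω = 0} with hS0def
  set S1 : Set Ω := ({ω | nx ω = ∞ ∨ ny ω = ∞}) \ S0 with hS1def
  have hS0 : MeasurableSet[m₀] S0 := @MeasurableSet.union Ω m₀ _ _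
    (hnx.1 (measurableSet_singleton 0)) (hny.1 (measurableSet_singleton 0))
  have hS1 : MeasurableSet[m₀] S1 := @MeasurableSet.diff Ω m₀ _ _
    (@MeasurableSet.union Ω m₀ _ _ (hnx.1 (measurableSet_singleton ∞))
      (hny.1 (measurableSet_singleton ∞))) hS0
  set G : Set Ω := A \ (S0 ∪ S1) with hGdef
  have hG : MeasurableSet[m₀] G := @MeasurableSet.diff Ω m₀ _ _ hA
    (@MeasurableSet.union Ω m₀ _ _ hS0 hS1)
  have hAS1 : MeasurableSet[m₀] (A ∩ S1) := @MeasurableSet.inter Ω m₀ _ _ hA hS1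
  have hAS0 : MeasurableSet[m₀] (A ∩ S0) := @MeasurableSet.inter Ω m₀ _ _ hA hS0
  have hsplit : A = (A ∩ S0) ∪ ((A ∩ S1) ∪ G) := by
    ext ω; constructor
    · intro hω
      by_cases h0 : ω ∈ S0
      · exact Or.inl ⟨hω, h0⟩
      · by_cases h1 : ω ∈ S1
        · exact Or.inr (Or.inl ⟨hω, h1⟩)
        · exact Or.inr (Or.inr ⟨hω, fun hc => hc.elim h0 h1⟩)
    · rintro (⟨h, _⟩ | ⟨h, _⟩ | ⟨h, _⟩) <;> exact h
  have hdisj1 : Disjoint (A ∩ S0) ((A ∩ S1) ∪ G) := by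
    rw [Set.disjoint_union_right]
    constructor
    · exact Set.disjoint_left.2 fun ω h1 h2 => h2.2.2 h1.2
    · exact Set.disjoint_left.2 fun ω h1 h2 => h2.2 (Or.inl h1.2)
  have hdisj2 : Disjoint (A ∩ S1) G :=
    Set.disjoint_left.2 fun ω h1 h2 => h2.2 (Or.inr h1.2)
  have key : ∀ F : Ω → ℝ≥0∞, ∫⁻ ω in A, F ω ∂μ
      = ∫⁻ ω in A ∩ S0, F ω ∂μ + (∫⁻ ω in A ∩ S1, F ω ∂μ + ∫⁻ ω in G, F ω ∂μ) := by
    intro F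
    conv_lhs => rw [hsplit]
    rw [lintegral_union (h₀ _ (@MeasurableSet.union Ω m₀ _ _ hAS1 hG)) hdisj1,
      lintegral_union (h₀ _ hG) hdisj2]
  rw [key fun ω => ENNReal.ofReal |x ω * y ω|, key fun ω => nx ω ^ (1/p) * ny ω ^ (1/q)]
  have hq0 : (0:ℝ) < 1/q := hpq.symm.one_div_pos
  have hp0 : (0:ℝ) < 1/p := hpq.one_div_pos
  refine add_le_add ?_ (add_le_add ?_ ?_)
  · -- piece S0 : integrand vanishes a.e.
    have hx0 := ae_zero_on_zero_set h₀ hxm hnx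
    have hy0 := ae_zero_on_zero_set h₀ hym hny
    have hzero : ∫⁻ ω in A ∩ S0, ENNReal.ofReal |x ω * y ω| ∂μ = 0 := by
      have hmem := ae_restrict_mem (μ := μ) (h₀ _ hAS0)
      have h1 := ae_restrict_of_ae (μ := μ) (s := A ∩ S0) hx0
      have h2 := ae_restrict_of_ae (μ := μ) (s := A ∩ S0) hy0
      have heq : ∀ᵐ ω ∂(μ.restrict (A ∩ S0)), ENNReal.ofReal |x ω * y ω| = 0 := by
        filter_upwards [hmem, h1, h2] with ω hm hx' hy'
        have hxy : x ω = 0 ∨ y ω = 0 := by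
          rcases hm.2 with h | h
          · left
            have h3 := hx' h
            rw [ENNReal.rpow_eq_zero_iff] at h3
            rcases h3 with ⟨h3, _⟩ | ⟨h3, _⟩
            · simpa using h3
            · exact absurd h3 (by simp)
          · right
            have h3 := hy' h
            rw [ENNReal.rpow_eq_zero_iff] at h3
            rcases h3 with ⟨h3, _⟩ | ⟨h3, _⟩
            · simpa using h3
            · exact absurd h3 (by simp)
        rcases hxy with h | h <;> simp [h]
      rw [lintegral_congr_ae heq, lintegral_zero]
    rw [hzero]; exact zero_le
  · -- piece S1 : RHS is infinite pointwise
    refine setLIntegral_mono' (h₀ _ hAS1) fun ω hω => ?_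
    have h1 : nx ω ^ (1/p) * ny ω ^ (1/q) = ∞ := by
      obtain ⟨hor, hn0⟩ := hω.2
      have hnx0 : nx ω ≠ 0 := fun hc => hn0 (Or.inl hc)
      have hny0 : ny ω ≠ 0 := fun hc => hn0 (Or.inr hc)
      rcases hor with h | h
      · have h2 : ny ω ^ (1/q) ≠ 0 := fun hc => by
          rcases ENNReal.rpow_eq_zero_iff.mp hc with ⟨h', _⟩ | ⟨_, h'⟩
          · exact hny0 h'
          · exact absurd h' (not_lt.2 hq0.le)
        rw [h, ENNReal.top_rpow_of_pos hp0, ENNReal.top_mul h2]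
      · have h2 : nx ω ^ (1/p) ≠ 0 := fun hc => by
          rcases ENNReal.rpow_eq_zero_iff.mp hc with ⟨h', _⟩ | ⟨_, h'⟩
          · exact hnx0 h'
          · exact absurd h' (not_lt.2 hp0.le)
        rw [h, ENNReal.top_rpow_of_pos hq0, ENNReal.mul_top h2]
    rw [h1]; exact le_top
  · -- piece G : weighted Young + pull-out
    set w : Ω → ℝ≥0∞ := fun ω => nx ω ^ (1/p - 1) * ny ω ^ (1/q) with hwdef
    set w2 : Ω → ℝ≥0∞ := fun ω => (w ω) ^ (-(q/p)) with hw2def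
    have hwmeas : Measurable[m₀] w := ((hnx.1.pow_const _).mul (hny.1.pow_const _))
    have hw2meas : Measurable[m₀] w2 := hwmeas.pow_const _
    have hGprop : ∀ ω ∈ G, nx ω ≠ 0 ∧ nx ω ≠ ∞ ∧ ny ω ≠ 0 ∧ ny ω ≠ ∞ := by
      intro ω hω
      have h0 := fun h => hω.2 (Or.inl h)
      have h1 := fun h => hω.2 (Or.inr h)
      refine ⟨fun hc => h0 (Or.inl hc), fun hc => ?_, fun hc => h0 (Or.inr hc), fun hc => ?_⟩
      · exact h1 ⟨Or.inl hc, fun h => h0 h⟩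
      · exact h1 ⟨Or.inr hc, fun h => h0 h⟩
    have hwG : ∀ ω ∈ G, w ω ≠ 0 ∧ w ω ≠ ∞ := by
      intro ω hω
      obtain ⟨h1, h2, h3, h4⟩ := hGprop ω hω
      constructor
      · intro hc
        simp only [hwdef] at hc
        rcases mul_eq_zero.mp hc with h | h <;> rw [ENNReal.rpow_eq_zero_iff] at h
        · rcases h with ⟨h, _⟩ | ⟨h, _⟩
          · exact h1 h
          · exact h2 h
        · rcases h with ⟨h, _⟩ | ⟨h, _⟩
          · exact h3 h
          · exact h4 h
      · simp only [hwdef]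
        refine ENNReal.mul_ne_top ?_ ?_
        · simp [ENNReal.rpow_eq_top_iff, h1, h2]
        · simp [ENNReal.rpow_eq_top_iff, h3, h4]
    calc ∫⁻ ω in G, ENNReal.ofReal |x ω * y ω| ∂μ
        ≤ ∫⁻ ω in G, (w ω * (‖x ω‖₊ : ℝ≥0∞) ^ p) / ENNReal.ofReal p
            + (w2 ω * (‖y ω‖₊ : ℝ≥0∞) ^ q) / ENNReal.ofReal q ∂μ := by
          refine setLIntegral_mono' (h₀ _ hG) fun ω hω => ?_
          have h5 : ENNReal.ofReal |x ω * y ω| = (‖x ω‖₊ : ℝ≥0∞) * (‖y ω‖₊ : ℝ≥0∞) := by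
            rw [abs_mul, ENNReal.ofReal_mul (abs_nonneg _), ofReal_abs_eq_nnnorm,
              ofReal_abs_eq_nnnorm]
          rw [h5]
          exact young_weighted hpq _ _ _ (hwG ω hω).1 (hwG ω hω).2
      _ = (∫⁻ ω in G, w ω * (‖x ω‖₊ : ℝ≥0∞) ^ p ∂μ) / ENNReal.ofReal p
          + (∫⁻ ω in G, w2 ω * (‖y ω‖₊ : ℝ≥0∞) ^ q ∂μ) / ENNReal.ofReal q := by
          simp_rw [div_eq_mul_inv]
          rw [lintegral_add_left (f := fun ω => w ω * (‖x ω‖₊ : ℝ≥0∞) ^ p * (ENNReal.ofReal p)⁻¹)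
            (((hwmeas.mono h₀ le_rfl).mul hxm).mul_const _)]
          rw [lintegral_mul_const'' (f := fun ω => w ω * (‖x ω‖₊ : ℝ≥0∞) ^ p) _
              ((hwmeas.mono h₀ le_rfl).mul hxm).aemeasurable,
            lintegral_mul_const'' (f := fun ω => w2 ω * (‖y ω‖₊ : ℝ≥0∞) ^ q) _
              ((hw2meas.mono h₀ le_rfl).mul hym).aemeasurable]
      _ = (∫⁻ ω in G, w ω * nx ω ∂μ) / ENNReal.ofReal p
          + (∫⁻ ω in G, w2 ω * ny ω ∂μ) / ENNReal.ofReal q := by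
          rw [pullout h₀ hxm hnx.1 hwmeas hnx.2 hG, pullout h₀ hym hny.1 hw2meas hny.2 hG]
      _ = (∫⁻ ω in G, nx ω ^ (1/p) * ny ω ^ (1/q) ∂μ) / ENNReal.ofReal p
          + (∫⁻ ω in G, nx ω ^ (1/p) * ny ω ^ (1/q) ∂μ) / ENNReal.ofReal q := by
          have e1 : ∀ ω ∈ G, w ω * nx ω = nx ω ^ (1/p) * ny ω ^ (1/q) := by
            intro ω hω
            obtain ⟨h1, h2, h3, h4⟩ := hGprop ω hω
            simp only [hwdef]
            calc nx ω ^ (1/p - 1) * ny ω ^ (1/q) * nx ω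
                = (nx ω ^ (1/p - 1) * nx ω ^ (1:ℝ)) * ny ω ^ (1/q) := by
                  rw [ENNReal.rpow_one]; ring
              _ = nx ω ^ (1/p) * ny ω ^ (1/q) := by
                  rw [← ENNReal.rpow_add _ _ h1 h2]; norm_num
          have e2 : ∀ ω ∈ G, w2 ω * ny ω = nx ω ^ (1/p) * ny ω ^ (1/q) := by
            intro ω hω
            obtain ⟨h1, h2, h3, h4⟩ := hGprop ω hω
            simp only [hw2def, hwdef]
            have hmul : ((nx ω ^ (1/p - 1) * ny ω ^ (1/q)) : ℝ≥0∞) ^ (-(q/p))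
                = nx ω ^ ((1/p - 1) * (-(q/p))) * ny ω ^ ((1/q) * (-(q/p))) := by
              rw [ENNReal.mul_rpow_of_ne_zero, ← ENNReal.rpow_mul, ← ENNReal.rpow_mul]
              · simp [ENNReal.rpow_eq_zero_iff, h1, h2]
              · simp [ENNReal.rpow_eq_zero_iff, h3, h4]
            rw [hmul]
            have hp' : p ≠ 0 := hpq.ne_zero
            have hq' : q ≠ 0 := hpq.symm.ne_zero
            have h1q : 1/p - 1 = -(1/q) := by
              rw [one_div, one_div]; exact hpq.inv_sub_one
            have hexp1 : (1/p - 1) * (-(q/p)) = 1/p := by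
              rw [h1q]; field_simp
            have hexp2 : (1/q) * (-(q/p)) = -(1/p) := by
              field_simp
            rw [hexp1, hexp2]
            calc nx ω ^ (1/p) * ny ω ^ (-(1/p)) * ny ω
                = nx ω ^ (1/p) * (ny ω ^ (-(1/p)) * ny ω ^ (1:ℝ)) := by
                  rw [ENNReal.rpow_one]; ring
              _ = nx ω ^ (1/p) * ny ω ^ (1/q) := by
                  rw [← ENNReal.rpow_add _ _ h3 h4]
                  congr 1
                  have h6 : -(1/p) + 1 = 1/q := by
                    have h7 := hpq.inv_add_inv_eq_one
                    rw [one_div, one_div]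
                    linarith
                  rw [h6]
          rw [setLIntegral_congr_fun (h₀ _ hG) e1,
            setLIntegral_congr_fun (h₀ _ hG) e2]
      _ = ∫⁻ ω in G, nx ω ^ (1/p) * ny ω ^ (1/q) ∂μ := by
          set I := ∫⁻ ω in G, nx ω ^ (1/p) * ny ω ^ (1/q) ∂μ with hI
          rw [div_eq_mul_inv, div_eq_mul_inv, ← mul_add, hpq.inv_add_inv_ennreal, mul_one]

end Stmt17Aux3

namespace Stmt17Aux4
open Stmt17Aux Stmt17Aux2 Stmt17Aux3

variable {Ω : Type*} {m₀ m : MeasurableSpace Ω}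

/-- The key pointwise inequality part 1. -/
lemma part1 {μ : @Measure Ω m} [IsProbabilityMeasure μ]
    (h₀ : m₀ ≤ m) {p q : ℝ} (hpq : Real.HolderConjugate p q)
    {x : Ω → ℝ} (hx : Measurable[m] x)
    (hxint : CondIntegrable μ m₀ fun ω => (‖x ω‖₊ : ℝ≥0∞) ^ p)
    {nx : Ω → ℝ≥0∞} (hnx : IsCondExpNN m₀ μ (fun ω => (‖x ω‖₊ : ℝ≥0∞) ^ p) nx)
    {y : Ω → ℝ} (hy : Measurable[m] y)
    (hyint : CondIntegrable μ m₀ fun ω => (‖y ω‖₊ : ℝ≥0∞) ^ q)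
    (hyb : ∀ ny : Ω → ℝ≥0∞, IsCondExpNN m₀ μ (fun ω => (‖y ω‖₊ : ℝ≥0∞) ^ q) ny →
      ∀ᵐ ω ∂μ, ny ω ^ (1 / q) ≤ 1)
    {k : Ω → ℝ} (hk : IsCondExpR m₀ μ (fun ω => x ω * y ω) k) :
    ∀ᵐ ω ∂μ, ENNReal.ofReal |k ω| ≤ nx ω ^ (1 / p) := by
  classical
  have hxm : Measurable[m] x := hx
  have hym : Measurable[m] y := hy
  have hxym : Measurable[m] fun ω => x ω * y ω := hxm.mul hym
  have hxpm : Measurable[m] fun ω => (‖x ω‖₊ : ℝ≥0∞) ^ p :=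
    (ENNReal.continuous_rpow_const.measurable).comp
      (measurable_coe_nnreal_ennreal.comp (measurable_nnnorm.comp hxm))
  have hypm : Measurable[m] fun ω => (‖y ω‖₊ : ℝ≥0∞) ^ q :=
    (ENNReal.continuous_rpow_const.measurable).comp
      (measurable_coe_nnreal_ennreal.comp (measurable_nnnorm.comp hym))
  obtain ⟨ny, hny⟩ := exists_version h₀ hypm hyint
  have hny1 : ∀ᵐ ω ∂μ, ny ω ^ (1 / q) ≤ 1 := hyb ny hny
  have hnxfin : ∀ᵐ ω ∂μ, nx ω < ∞ := version_ae_lt_top h₀ hxint hnx.2 hnx.1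
  have hnyfin : ∀ᵐ ω ∂μ, ny ω < ∞ := version_ae_lt_top h₀ hyint hny.2 hny.1
  obtain ⟨Ax, hAxmono, hAxm, hAxc, hAxf⟩ := condInt_exhaustion h₀ hxint
  obtain ⟨Ay, hAymono, hAym, hAyc, hAyf⟩ := condInt_exhaustion h₀ hyint
  set g : Ω → ℝ≥0∞ := fun ω => nx ω ^ (1 / p) * ny ω ^ (1 / q) with hgdef
  have hgmeas : Measurable[m₀] g :=
    (hnx.1.pow_const _).mul (hny.1.pow_const _)
  have hkabs : Measurable[m₀] fun ω => ENNReal.ofReal |k ω| :=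
    ENNReal.measurable_ofReal.comp (continuous_abs.measurable.comp hk.1)
  -- integrability of x*y on Ax n ∩ Ay n
  have hxyint : ∀ n, @IntegrableOn Ω ℝ m _ _ (fun ω => x ω * y ω) (Ax n ∩ Ay n) μ := by
    intro n
    constructor
    · exact (hxym.aestronglyMeasurable).restrict
    · rw [hasFiniteIntegral_def]
      have hb : ∀ ω, (‖x ω * y ω‖₊ : ℝ≥0∞)
          ≤ (‖x ω‖₊ : ℝ≥0∞) ^ p + (‖y ω‖₊ : ℝ≥0∞) ^ q := by
        intro ω
        have h1 : (‖x ω * y ω‖₊ : ℝ≥0∞) = (‖x ω‖₊ : ℝ≥0∞) * (‖y ω‖₊ : ℝ≥0∞) := by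
          rw [← ofReal_abs_eq_nnnorm, ← ofReal_abs_eq_nnnorm, ← ofReal_abs_eq_nnnorm,
            abs_mul, ENNReal.ofReal_mul (abs_nonneg _)]
        rw [h1]
        calc (‖x ω‖₊ : ℝ≥0∞) * (‖y ω‖₊ : ℝ≥0∞)
            ≤ (‖x ω‖₊ : ℝ≥0∞) ^ p / ENNReal.ofReal p
              + (‖y ω‖₊ : ℝ≥0∞) ^ q / ENNReal.ofReal q := ENNReal.young_inequality _ _ hpq
          _ ≤ (‖x ω‖₊ : ℝ≥0∞) ^ p / 1 + (‖y ω‖₊ : ℝ≥0∞) ^ q / 1 := by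
              gcongr <;> simp [ENNReal.one_le_ofReal, hpq.lt.le, hpq.symm.lt.le]
          _ = (‖x ω‖₊ : ℝ≥0∞) ^ p + (‖y ω‖₊ : ℝ≥0∞) ^ q := by simp
      calc ∫⁻ ω in Ax n ∩ Ay n, (‖x ω * y ω‖₊ : ℝ≥0∞) ∂μ
          ≤ ∫⁻ ω in Ax n ∩ Ay n, ((‖x ω‖₊ : ℝ≥0∞) ^ p + (‖y ω‖₊ : ℝ≥0∞) ^ q) ∂μ :=
            lintegral_mono fun ω => hb ω
        _ = (∫⁻ ω in Ax n ∩ Ay n, (‖x ω‖₊ : ℝ≥0∞) ^ p ∂μ)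
            + ∫⁻ ω in Ax n ∩ Ay n, (‖y ω‖₊ : ℝ≥0∞) ^ q ∂μ := lintegral_add_left hxpm _
        _ < ∞ := by
            refine ENNReal.add_lt_top.2 ⟨?_, ?_⟩
            · exact lt_of_le_of_lt (lintegral_mono_set Set.inter_subset_left) (hAxf n)
            · exact lt_of_le_of_lt (lintegral_mono_set Set.inter_subset_right) (hAyf n)
  -- main claim
  have claim : ∀ B : Set Ω, MeasurableSet[m₀] B → @IntegrableOn Ω ℝ m _ _ (fun ω => x ω * y ω) B μ →
      ∫⁻ ω in B, ENNReal.ofReal |k ω| ∂μ ≤ ∫⁻ ω in B, g ω ∂μ := by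
    intro B hB hBint
    obtain ⟨hkint, -⟩ := hk.2 B hB hBint
    set Bp : Set Ω := B ∩ {ω | 0 ≤ k ω} with hBpdef
    set Bm : Set Ω := B ∩ {ω | k ω < 0} with hBmdef
    have hset1 : MeasurableSet[m₀] {ω | 0 ≤ k ω} := by
      exact measurableSet_le measurable_const hk.1
    have hset2 : MeasurableSet[m₀] {ω | k ω < 0} := by
      exact measurableSet_lt hk.1 measurable_const
    have hBp : MeasurableSet[m₀] Bp := @MeasurableSet.inter Ω m₀ _ _ hB hset1
    have hBm : MeasurableSet[m₀] Bm := @MeasurableSet.inter Ω m₀ _ _ hB hset2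
    have hBpint : @IntegrableOn Ω ℝ m _ _ (fun ω => x ω * y ω) Bp μ := by
      exact hBint.mono_set Set.inter_subset_left
    have hBmint : @IntegrableOn Ω ℝ m _ _ (fun ω => x ω * y ω) Bm μ := by
      exact hBint.mono_set Set.inter_subset_left
    obtain ⟨hkp, hkeqp⟩ := hk.2 Bp hBp hBpint
    obtain ⟨hkm, hkeqm⟩ := hk.2 Bm hBm hBmint
    have hunion : B = Bp ∪ Bm := by
      ext ω; constructor
      · intro hω
        rcases le_or_gt 0 (k ω) with h | h
        · exact Or.inl ⟨hω, h⟩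
        · exact Or.inr ⟨hω, h⟩
      · rintro (⟨h, _⟩ | ⟨h, _⟩) <;> exact h
    have hdisj : Disjoint Bp Bm :=
      Set.disjoint_left.2 fun ω h1 h2 => absurd (show 0 ≤ k ω from h1.2)
        (not_le.2 (show k ω < 0 from h2.2))
    have hintp : ∫ ω in Bp, |k ω| ∂μ ≤ ∫ ω in Bp, |x ω * y ω| ∂μ := by
      have e1 : ∫ ω in Bp, |k ω| ∂μ = ∫ ω in Bp, k ω ∂μ := by
        exact setIntegral_congr_fun (h₀ _ hBp) fun ω hω => abs_of_nonneg hω.2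
      rw [e1, ← hkeqp]
      calc ∫ ω in Bp, x ω * y ω ∂μ ≤ |∫ ω in Bp, x ω * y ω ∂μ| := le_abs_self _
        _ ≤ ∫ ω in Bp, |x ω * y ω| ∂μ := by
            simp only [← Real.norm_eq_abs]
            exact norm_integral_le_integral_norm _
    have hintm : ∫ ω in Bm, |k ω| ∂μ ≤ ∫ ω in Bm, |x ω * y ω| ∂μ := by
      have e1 : ∫ ω in Bm, |k ω| ∂μ = - ∫ ω in Bm, k ω ∂μ := by
        rw [← integral_neg]
        exact setIntegral_congr_fun (h₀ _ hBm) fun ω hω => abs_of_neg hω.2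
      rw [e1, ← hkeqm]
      calc -∫ ω in Bm, x ω * y ω ∂μ ≤ |∫ ω in Bm, x ω * y ω ∂μ| := neg_le_abs _
        _ ≤ ∫ ω in Bm, |x ω * y ω| ∂μ := by
            simp only [← Real.norm_eq_abs]
            exact norm_integral_le_integral_norm _
    have habs : ∫ ω in B, |k ω| ∂μ ≤ ∫ ω in B, |x ω * y ω| ∂μ := by
      have hsum1 : ∫ ω in B, |k ω| ∂μ = ∫ ω in Bp, |k ω| ∂μ + ∫ ω in Bm, |k ω| ∂μ := by
        conv_lhs => rw [hunion]
        exact setIntegral_union hdisj (h₀ _ hBm) (by exact hkp.abs) (by exact hkm.abs)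
      have hsum2 : ∫ ω in B, |x ω * y ω| ∂μ
          = ∫ ω in Bp, |x ω * y ω| ∂μ + ∫ ω in Bm, |x ω * y ω| ∂μ := by
        conv_lhs => rw [hunion]
        exact setIntegral_union hdisj (h₀ _ hBm) (by exact hBpint.abs) (by exact hBmint.abs)
      rw [hsum1, hsum2]
      exact add_le_add hintp hintm
    calc ∫⁻ ω in B, ENNReal.ofReal |k ω| ∂μ = ENNReal.ofReal (∫ ω in B, |k ω| ∂μ) :=
          (ofReal_integral_eq_lintegral_ofReal (by exact hkint.abs)
            (Filter.Eventually.of_forall fun ω => abs_nonneg _)).symm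
      _ ≤ ENNReal.ofReal (∫ ω in B, |x ω * y ω| ∂μ) := ENNReal.ofReal_le_ofReal habs
      _ = ∫⁻ ω in B, ENNReal.ofReal |x ω * y ω| ∂μ :=
          ofReal_integral_eq_lintegral_ofReal (by exact hBint.abs)
            (Filter.Eventually.of_forall fun ω => abs_nonneg _)
      _ ≤ ∫⁻ ω in B, g ω ∂μ := holder_core h₀ hpq hxm hym hnx hny hB
  -- the null sets
  set s : ℕ → ℕ → ℕ → Set Ω := fun n j m' =>
    (Ax n ∩ Ay n) ∩ ({ω | g ω + ((j : ℝ≥0∞))⁻¹ ≤ ENNReal.ofReal |k ω|}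
      ∩ ({ω | nx ω ≤ (m' : ℝ≥0∞)} ∩ {ω | ny ω ≤ (m' : ℝ≥0∞)})) with hsdef
  have hsmeas : ∀ n j m', MeasurableSet[m₀] (s n j m') := by
    intro n j m'
    have hset1 : MeasurableSet[m₀] {ω | g ω + ((j : ℝ≥0∞))⁻¹ ≤ ENNReal.ofReal |k ω|} := by
      exact measurableSet_le (hgmeas.add_const _) hkabs
    have hset2 : MeasurableSet[m₀] {ω | nx ω ≤ (m' : ℝ≥0∞)} := by
      exact measurableSet_le hnx.1 measurable_const
    have hset3 : MeasurableSet[m₀] {ω | ny ω ≤ (m' : ℝ≥0∞)} := by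
      exact measurableSet_le hny.1 measurable_const
    exact @MeasurableSet.inter Ω m₀ _ _ (@MeasurableSet.inter Ω m₀ _ _ (hAxm n) (hAym n))
      (@MeasurableSet.inter Ω m₀ _ _ hset1 (@MeasurableSet.inter Ω m₀ _ _ hset2 hset3))
  have hsnull : ∀ n j m', μ (s n j m') = 0 := by
    intro n j m'
    have hsint : @IntegrableOn Ω ℝ m _ _ (fun ω => x ω * y ω) (s n j m') μ := by
      exact (hxyint n).mono_set Set.inter_subset_left
    have h1 : ∫⁻ ω in s n j m', g ω ∂μ + ((j : ℝ≥0∞))⁻¹ * μ (s n j m')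
        ≤ ∫⁻ ω in s n j m', ENNReal.ofReal |k ω| ∂μ := by
      have e1 : ∫⁻ ω in s n j m', (g ω + ((j : ℝ≥0∞))⁻¹) ∂μ
          = ∫⁻ ω in s n j m', g ω ∂μ + ((j : ℝ≥0∞))⁻¹ * μ (s n j m') := by
        rw [lintegral_add_right _ measurable_const, setLIntegral_const]
      rw [← e1]
      exact setLIntegral_mono' (h₀ _ (hsmeas n j m')) fun ω hω => hω.2.1
    have h2 : ∫⁻ ω in s n j m', ENNReal.ofReal |k ω| ∂μ ≤ ∫⁻ ω in s n j m', g ω ∂μ :=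
      claim _ (hsmeas n j m') hsint
    have hfin : ∫⁻ ω in s n j m', g ω ∂μ ≠ ∞ := by
      have hb : ∀ ω ∈ s n j m', g ω ≤ (m' : ℝ≥0∞) ^ (1/p) * (m' : ℝ≥0∞) ^ (1/q) := by
        intro ω hω
        exact mul_le_mul' (ENNReal.rpow_le_rpow hω.2.2.1 hpq.one_div_nonneg)
          (ENNReal.rpow_le_rpow hω.2.2.2 hpq.symm.one_div_nonneg)
      refine ne_of_lt (lt_of_le_of_lt (setLIntegral_mono' (h₀ _ (hsmeas n j m')) hb) ?_)
      rw [setLIntegral_const]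
      refine ENNReal.mul_lt_top (ENNReal.mul_lt_top ?_ ?_) (measure_lt_top μ _)
      · exact ENNReal.rpow_lt_top_of_nonneg hpq.one_div_nonneg (by simp)
      · exact ENNReal.rpow_lt_top_of_nonneg hpq.symm.one_div_nonneg (by simp)
    have h3 : ∫⁻ ω in s n j m', g ω ∂μ + ((j : ℝ≥0∞))⁻¹ * μ (s n j m')
        ≤ ∫⁻ ω in s n j m', g ω ∂μ + 0 := by
      rw [add_zero]; exact h1.trans h2
    have h4 := (ENNReal.add_le_add_iff_left hfin).mp h3
    have h5 : ((j : ℝ≥0∞))⁻¹ * μ (s n j m') = 0 := le_antisymm h4 (zero_le)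
    rcases mul_eq_zero.mp h5 with h | h
    · exact absurd h (by simp)
    · exact h
  have hnull3 : μ (⋃ n, ⋃ j, ⋃ m', s n j m') = 0 := by
    refine measure_iUnion_null fun n => measure_iUnion_null fun j => measure_iUnion_null fun m' =>
      hsnull n j m'
  have hN := measure_eq_zero_iff_ae_notMem.mp hnull3
  filter_upwards [hN, hnxfin, hnyfin, hny1] with ω hωN hωx hωy hωy1
  have hkg : ENNReal.ofReal |k ω| ≤ g ω := by
    by_contra hlt
    push_neg at hlt
    obtain ⟨n1, hn1⟩ := hAxc ω
    obtain ⟨n2, hn2⟩ := hAyc ω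
    have hc : ENNReal.ofReal |k ω| ≠ ∞ := ENNReal.ofReal_ne_top
    have hgc : g ω ≤ ENNReal.ofReal |k ω| := hlt.le
    obtain ⟨j, hj⟩ := ENNReal.exists_inv_nat_lt (a := ENNReal.ofReal |k ω| - g ω)
      (by rwa [Ne, tsub_eq_zero_iff_le, not_le])
    obtain ⟨m1, hm1⟩ := ENNReal.exists_nat_gt hωx.ne
    obtain ⟨m2, hm2⟩ := ENNReal.exists_nat_gt hωy.ne
    refine hωN (Set.mem_iUnion.2 ⟨max n1 n2, Set.mem_iUnion.2 ⟨j, Set.mem_iUnion.2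
      ⟨max m1 m2, ?_⟩⟩⟩)
    refine ⟨⟨hAxmono (le_max_left n1 n2) hn1, hAymono (le_max_right n1 n2) hn2⟩, ?_, ?_, ?_⟩
    · calc g ω + ((j : ℝ≥0∞))⁻¹ ≤ g ω + (ENNReal.ofReal |k ω| - g ω) :=
            add_le_add_right hj.le _
        _ = ENNReal.ofReal |k ω| := add_tsub_cancel_of_le hgc
    · exact le_trans hm1.le (by exact_mod_cast Nat.cast_le.2 (le_max_left m1 m2))
    · exact le_trans hm2.le (by exact_mod_cast Nat.cast_le.2 (le_max_right m1 m2))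
  calc ENNReal.ofReal |k ω| ≤ g ω := hkg
    _ = nx ω ^ (1/p) * ny ω ^ (1/q) := rfl
    _ ≤ nx ω ^ (1/p) * 1 := mul_le_mul_right hωy1 _
    _ = nx ω ^ (1/p) := mul_one _

end Stmt17Aux4

namespace Stmt17Aux5
open Stmt17Aux Stmt17Aux2 Stmt17Aux3

variable {Ω : Type*} {m₀ mT m : MeasurableSpace Ω}

lemma part2 {μ : @Measure Ω m} [IsProbabilityMeasure μ]
    (h₀T : m₀ ≤ mT) (hTm : mT ≤ m) {p q : ℝ} (hpq : Real.HolderConjugate p q)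
    {x : Ω → ℝ} (hx : Measurable[mT] x)
    (hxint : CondIntegrable μ m₀ fun ω => (‖x ω‖₊ : ℝ≥0∞) ^ p)
    {nx : Ω → ℝ≥0∞} (hnx : IsCondExpNN m₀ μ (fun ω => (‖x ω‖₊ : ℝ≥0∞) ^ p) nx)
    (u : Ω → ℝ≥0∞) (hu : Measurable[m₀] u)
    (h : ∀ y : Ω → ℝ, Measurable[mT] y →
      CondIntegrable μ m₀ (fun ω => (‖y ω‖₊ : ℝ≥0∞) ^ q) →
      (∀ ny : Ω → ℝ≥0∞, IsCondExpNN m₀ μ (fun ω => (‖y ω‖₊ : ℝ≥0∞) ^ q) ny →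
        ∀ᵐ ω ∂μ, ny ω ^ (1 / q) ≤ 1) →
      ∀ k : Ω → ℝ, IsCondExpR m₀ μ (fun ω => x ω * y ω) k →
        ∀ᵐ ω ∂μ, ENNReal.ofReal |k ω| ≤ u ω) :
    ∀ᵐ ω ∂μ, nx ω ^ (1 / p) ≤ u ω := by
  classical
  have h₀ : m₀ ≤ m := h₀T.trans hTm
  have hxm : Measurable[m] x := hx.mono hTm le_rfl
  have hxpm : Measurable[m] fun ω => (‖x ω‖₊ : ℝ≥0∞) ^ p :=
    (ENNReal.continuous_rpow_const.measurable).comp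
      (measurable_coe_nnreal_ennreal.comp (measurable_nnnorm.comp hxm))
  have hp1 : (0:ℝ) < p - 1 := sub_pos.2 hpq.lt
  have hp0 : (0:ℝ) < p := hpq.pos
  have hq0 : (0:ℝ) < q := hpq.symm.pos
  -- the good set and auxiliary functions
  set G : Set Ω := {ω | nx ω ≠ 0 ∧ nx ω ≠ ∞} with hGdef
  have hG : MeasurableSet[m₀] G := by
    exact MeasurableSet.inter (hnx.1 (measurableSet_singleton 0)).compl
      (hnx.1 (measurableSet_singleton ∞)).compl
  set c : Ω → ℝ := G.indicator fun ω => (nx ω ^ (1/p - 1)).toReal with hcdef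
  have hc_nonneg : ∀ ω, 0 ≤ c ω := fun ω => by
    rw [hcdef]
    exact Set.indicator_nonneg (fun ω _ => ENNReal.toReal_nonneg) ω
  have hc_meas0 : Measurable[m₀] c := by
    exact Measurable.indicator
      (ENNReal.measurable_toReal.comp
        ((ENNReal.continuous_rpow_const.measurable).comp hnx.1)) hG
  set sg : Ω → ℝ := fun ω => if x ω < 0 then (-1:ℝ) else if 0 < x ω then 1 else 0 with hsgdef
  have hsg_meas : Measurable[mT] sg := by
    refine Measurable.ite (measurableSet_lt hx measurable_const) measurable_const ?_
    exact Measurable.ite (measurableSet_lt measurable_const hx) measurable_const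
      measurable_const
  have hsg_mul : ∀ ω, x ω * sg ω = |x ω| := by
    intro ω
    rcases lt_trichotomy (x ω) 0 with hlt | heq | hgt
    · rw [hsgdef]; simp only [if_pos hlt]
      rw [abs_of_neg hlt]; ring
    · rw [hsgdef]; simp [heq]
    · rw [hsgdef]; simp only [if_neg (not_lt.2 hgt.le), if_pos hgt]
      rw [abs_of_pos hgt]; ring
  have hsg_abs : ∀ ω, x ω ≠ 0 → |sg ω| = 1 := by
    intro ω hω
    rcases lt_trichotomy (x ω) 0 with hlt | heq | hgt
    · rw [hsgdef]; simp [if_pos hlt]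
    · exact absurd heq hω
    · rw [hsgdef]; simp [if_neg (not_lt.2 hgt.le), if_pos hgt]
  set y : Ω → ℝ := fun ω => sg ω * |x ω| ^ (p - 1) * c ω with hydef
  have hy_meas : Measurable[mT] y := by
    refine Measurable.mul (Measurable.mul hsg_meas ?_) (hc_meas0.mono h₀T le_rfl)
    exact (Real.continuous_rpow_const hp1.le).measurable.comp
      (continuous_abs.measurable.comp hx)
  -- pointwise identities
  have id1 : ∀ ω, x ω * y ω = |x ω| ^ p * c ω := by
    intro ω
    rw [hydef]
    show x ω * (sg ω * |x ω| ^ (p - 1) * c ω) = |x ω| ^ p * c ω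
    by_cases hx0 : x ω = 0
    · rw [hx0]; simp [Real.zero_rpow hp0.ne']
    · have habs : (0:ℝ) < |x ω| := abs_pos.2 hx0
      have e : x ω * (sg ω * |x ω| ^ (p - 1) * c ω)
          = (x ω * sg ω) * |x ω| ^ (p - 1) * c ω := by ring
      rw [e, hsg_mul ω]
      have e2 : |x ω| * |x ω| ^ (p - 1) = |x ω| ^ p := by
        nth_rewrite 1 [← Real.rpow_one (|x ω|)]
        rw [← Real.rpow_add habs]
        norm_num
      rw [e2]
  have id2 : ∀ ω, |y ω| = |x ω| ^ (p - 1) * c ω := by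
    intro ω
    rw [hydef]
    show |sg ω * |x ω| ^ (p - 1) * c ω| = |x ω| ^ (p - 1) * c ω
    by_cases hx0 : x ω = 0
    · rw [hx0]; simp [Real.zero_rpow hp1.ne']
    · rw [abs_mul, abs_mul, hsg_abs ω hx0, one_mul,
        abs_of_nonneg (Real.rpow_nonneg (abs_nonneg _) _), abs_of_nonneg (hc_nonneg ω)]
  have hw1_meas : Measurable[m₀] fun ω => ENNReal.ofReal (c ω) :=
    ENNReal.measurable_ofReal.comp hc_meas0
  have hwq_meas : Measurable[m₀] fun ω => (ENNReal.ofReal (c ω)) ^ q :=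
    (ENNReal.continuous_rpow_const.measurable).comp hw1_meas
  have id3 : ∀ ω, (‖y ω‖₊ : ℝ≥0∞) ^ q = (ENNReal.ofReal (c ω)) ^ q * (‖x ω‖₊ : ℝ≥0∞) ^ p := by
    intro ω
    rw [← ofReal_abs_eq_nnnorm, ← ofReal_abs_eq_nnnorm, id2 ω,
      ENNReal.ofReal_mul (Real.rpow_nonneg (abs_nonneg _) _),
      ENNReal.mul_rpow_of_nonneg _ _ hq0.le,
      ← ENNReal.ofReal_rpow_of_nonneg (abs_nonneg _) hp1.le,
      ← ENNReal.rpow_mul, hpq.sub_one_mul_conj, mul_comm]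
  have hGval : ∀ ω ∈ G, ENNReal.ofReal (c ω) = nx ω ^ (1/p - 1) := by
    intro ω hω
    rw [hcdef]
    show ENNReal.ofReal (G.indicator (fun ω => (nx ω ^ (1/p - 1)).toReal) ω) = _
    rw [Set.indicator_of_mem hω, ENNReal.ofReal_toReal]
    rw [Ne, ENNReal.rpow_eq_top_iff]
    push_neg
    exact ⟨fun h' => absurd h' hω.1, fun h' => absurd h' hω.2⟩
  have hGval0 : ∀ ω ∉ G, c ω = 0 := by
    intro ω hω
    rw [hcdef]
    exact Set.indicator_of_notMem hω _
  have id4 : ∀ ω, (ENNReal.ofReal (c ω)) ^ q * nx ω = G.indicator (fun _ => (1:ℝ≥0∞)) ω := by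
    intro ω
    by_cases hω : ω ∈ G
    · rw [Set.indicator_of_mem hω, hGval ω hω, ← ENNReal.rpow_mul]
      have hexp : (1/p - 1) * q = -1 := by
        have h1 : 1/p - 1 = -(1/q) := by
          rw [one_div, one_div]; exact hpq.inv_sub_one
        rw [h1]
        field_simp
      rw [hexp, ENNReal.rpow_neg_one, ENNReal.inv_mul_cancel hω.1 hω.2]
    · rw [Set.indicator_of_notMem hω, hGval0 ω hω]
      simp [ENNReal.zero_rpow_of_pos hq0]
  have id5 : ∀ ω, ENNReal.ofReal (c ω) * nx ω = G.indicator (fun ω => nx ω ^ (1/p)) ω := by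
    intro ω
    by_cases hω : ω ∈ G
    · rw [Set.indicator_of_mem hω, hGval ω hω]
      nth_rewrite 2 [← ENNReal.rpow_one (nx ω)]
      rw [← ENNReal.rpow_add _ _ hω.1 hω.2]
      norm_num
    · rw [Set.indicator_of_notMem hω, hGval0 ω hω]
      simp
  set k : Ω → ℝ := fun ω => (G.indicator (fun ω => nx ω ^ (1/p)) ω).toReal with hkdef
  have hk_nonneg : ∀ ω, 0 ≤ k ω := fun ω => ENNReal.toReal_nonneg
  have hk_meas : Measurable[m₀] k :=
    ENNReal.measurable_toReal.comp
      (Measurable.indicator ((ENNReal.continuous_rpow_const.measurable).comp hnx.1) hG)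
  have id6 : ∀ ω, ENNReal.ofReal (k ω) = G.indicator (fun ω => nx ω ^ (1/p)) ω := by
    intro ω
    simp only [hkdef]
    by_cases hω : ω ∈ G
    · rw [Set.indicator_of_mem hω, ENNReal.ofReal_toReal]
      rw [Ne, ENNReal.rpow_eq_top_iff]
      push_neg
      exact ⟨fun h' => absurd h' hω.1, fun h' => absurd h' hω.2⟩
    · rw [Set.indicator_of_notMem hω]
      simp
  have hxy_nonneg : ∀ ω, 0 ≤ x ω * y ω := by
    intro ω
    rw [id1 ω]
    exact mul_nonneg (Real.rpow_nonneg (abs_nonneg _) _) (hc_nonneg ω)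
  have id7 : ∀ ω, ENNReal.ofReal (x ω * y ω)
      = ENNReal.ofReal (c ω) * (‖x ω‖₊ : ℝ≥0∞) ^ p := by
    intro ω
    rw [id1 ω, ENNReal.ofReal_mul (Real.rpow_nonneg (abs_nonneg _) _),
      ← ENNReal.ofReal_rpow_of_nonneg (abs_nonneg _) hp0.le, ofReal_abs_eq_nnnorm, mul_comm]
  -- lintegral identity over m₀-sets
  have hset : ∀ A : Set Ω, MeasurableSet[m₀] A →
      ∫⁻ ω in A, ENNReal.ofReal (x ω * y ω) ∂μ
        = ∫⁻ ω in A, G.indicator (fun ω => nx ω ^ (1/p)) ω ∂μ := by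
    intro A hA
    calc ∫⁻ ω in A, ENNReal.ofReal (x ω * y ω) ∂μ
        = ∫⁻ ω in A, ENNReal.ofReal (c ω) * (‖x ω‖₊ : ℝ≥0∞) ^ p ∂μ :=
          lintegral_congr fun ω => id7 ω
      _ = ∫⁻ ω in A, ENNReal.ofReal (c ω) * nx ω ∂μ := pullout h₀ hxpm hnx.1 hw1_meas hnx.2 hA
      _ = ∫⁻ ω in A, G.indicator (fun ω => nx ω ^ (1/p)) ω ∂μ :=
          lintegral_congr fun ω => id5 ω
  have hsetq : ∀ A : Set Ω, MeasurableSet[m₀] A →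
      ∫⁻ ω in A, (‖y ω‖₊ : ℝ≥0∞) ^ q ∂μ
        = ∫⁻ ω in A, G.indicator (fun _ => (1:ℝ≥0∞)) ω ∂μ := by
    intro A hA
    calc ∫⁻ ω in A, (‖y ω‖₊ : ℝ≥0∞) ^ q ∂μ
        = ∫⁻ ω in A, (ENNReal.ofReal (c ω)) ^ q * (‖x ω‖₊ : ℝ≥0∞) ^ p ∂μ :=
          lintegral_congr fun ω => id3 ω
      _ = ∫⁻ ω in A, (ENNReal.ofReal (c ω)) ^ q * nx ω ∂μ :=
          pullout h₀ hxpm hnx.1 hwq_meas hnx.2 hA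
      _ = ∫⁻ ω in A, G.indicator (fun _ => (1:ℝ≥0∞)) ω ∂μ :=
          lintegral_congr fun ω => id4 ω
  -- conditional integrability of ‖y‖^q
  have hyint : CondIntegrable μ m₀ fun ω => (‖y ω‖₊ : ℝ≥0∞) ^ q := by
    refine ⟨fun _ => 1, measurable_const, fun _ => one_pos, ?_⟩
    have e1 : ∫⁻ ω, ENNReal.ofReal (1:ℝ) * (‖y ω‖₊ : ℝ≥0∞) ^ q ∂μ
        = ∫⁻ ω in Set.univ, (‖y ω‖₊ : ℝ≥0∞) ^ q ∂μ := by
      rw [Measure.restrict_univ]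
      refine lintegral_congr fun ω => ?_
      simp
    rw [e1, hsetq Set.univ MeasurableSet.univ]
    calc ∫⁻ ω in Set.univ, G.indicator (fun _ => (1:ℝ≥0∞)) ω ∂μ
        ≤ ∫⁻ _ in Set.univ, (1:ℝ≥0∞) ∂μ := by
          refine setLIntegral_mono' MeasurableSet.univ fun ω _ => ?_
          exact Set.indicator_le_self' (fun _ _ => zero_le) ω
      _ < ∞ := by
          rw [setLIntegral_const]
          simp [measure_lt_top]
  -- the conditional q-norm bound
  have hny_bound : ∀ ny : Ω → ℝ≥0∞, IsCondExpNN m₀ μ (fun ω => (‖y ω‖₊ : ℝ≥0∞) ^ q) ny →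
      ∀ᵐ ω ∂μ, ny ω ^ (1 / q) ≤ 1 := by
    intro ny hny
    have huniq : ny =ᵐ[μ] G.indicator (fun _ => (1:ℝ≥0∞)) := by
      refine version_unique h₀ hny.1 (measurable_const.indicator hG) fun A hA => ?_
      rw [← hny.2 A hA, hsetq A hA]
    filter_upwards [huniq] with ω hω
    rw [hω]
    calc (G.indicator (fun _ => (1:ℝ≥0∞)) ω) ^ (1/q)
        ≤ (1:ℝ≥0∞) ^ (1/q) := by
          refine ENNReal.rpow_le_rpow ?_ (by positivity)
          exact Set.indicator_le_self' (fun _ _ => zero_le) ω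
      _ = 1 := ENNReal.one_rpow _
  -- k is a version of the conditional expectation of x*y
  have hkcond : IsCondExpR m₀ μ (fun ω => x ω * y ω) k := by
    refine ⟨hk_meas, fun A hA hInt => ?_⟩
    have hL : ∫⁻ ω in A, ENNReal.ofReal (x ω * y ω) ∂μ
        = ∫⁻ ω in A, ENNReal.ofReal (k ω) ∂μ := by
      rw [hset A hA]
      exact (lintegral_congr fun ω => id6 ω).symm
    have hfin : ∫⁻ ω in A, ENNReal.ofReal (k ω) ∂μ < ∞ := by
      rw [← hL]
      have e2 : ∫⁻ ω in A, ENNReal.ofReal (x ω * y ω) ∂μ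
          = ∫⁻ ω in A, (‖x ω * y ω‖₊ : ℝ≥0∞) ∂μ := by
        refine lintegral_congr fun ω => ?_
        rw [← ofReal_abs_eq_nnnorm, abs_of_nonneg (hxy_nonneg ω)]
      rw [e2]
      exact hInt.2
    have hkint : @IntegrableOn Ω ℝ m _ _ k A μ := by
      constructor
      · exact ((hk_meas.mono h₀ le_rfl).aestronglyMeasurable).restrict
      · rw [hasFiniteIntegral_def]
        have e3 : ∫⁻ ω in A, (‖k ω‖₊ : ℝ≥0∞) ∂μ = ∫⁻ ω in A, ENNReal.ofReal (k ω) ∂μ := by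
          refine lintegral_congr fun ω => ?_
          rw [← ofReal_abs_eq_nnnorm, abs_of_nonneg (hk_nonneg ω)]
        simp only [enorm_eq_nnnorm]
        rw [e3]
        exact hfin
    refine ⟨hkint, ?_⟩
    rw [integral_eq_lintegral_of_nonneg_ae (Filter.Eventually.of_forall fun ω => hxy_nonneg ω)
        ((hxm.mul (hy_meas.mono hTm le_rfl)).aestronglyMeasurable).restrict,
      integral_eq_lintegral_of_nonneg_ae (Filter.Eventually.of_forall fun ω => hk_nonneg ω)
        ((hk_meas.mono h₀ le_rfl).aestronglyMeasurable).restrict,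
      hL]
  -- conclude
  have hae := h y hy_meas hyint hny_bound k hkcond
  have hnxfin : ∀ᵐ ω ∂μ, nx ω < ∞ := version_ae_lt_top h₀ hxint hnx.2 hnx.1
  filter_upwards [hae, hnxfin] with ω hωu hωfin
  by_cases hω : ω ∈ G
  · have e : ENNReal.ofReal |k ω| = nx ω ^ (1/p) := by
      rw [abs_of_nonneg (hk_nonneg ω), id6 ω, Set.indicator_of_mem hω]
    rw [← e]
    exact hωu
  · have h0 : nx ω = 0 := by
      by_contra h0
      exact hω ⟨h0, hωfin.ne⟩
    rw [h0, ENNReal.zero_rpow_of_pos (by positivity)]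
    exact zero_le

end Stmt17Aux5

/-- dual characterization of the conditional `p`-norm. For `1 < p < ∞`,
`q = p/(p−1)`, and `x ∈ L^p_{F₀}(F_T)`, the conditional norm `E[|x|^p|F₀]^{1/p}` is the
essential supremum of `|E[x·y|F₀]|` over all `y ∈ L^q_{F₀}(F_T)` with conditional `q`-norm
at most `1`: it is an a.e. upper bound of all such `|E[x·y|F₀]|`, and it is a.e. below any
`F₀`-measurable a.e. upper bound of them. -/
theorem stmt17
    {Ω : Type*} {m : MeasurableSpace Ω} (μ : Measure Ω) [IsProbabilityMeasure μ]
    (m₀ mT : MeasurableSpace Ω) (h₀T : m₀ ≤ mT) (hTm : mT ≤ m)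
    (p : ℝ) (hp : 1 < p) (q : ℝ) (hq : q = p / (p - 1))
    (x : Ω → ℝ) (hx : Measurable[mT] x)
    (hxint : CondIntegrable μ m₀ fun ω => (‖x ω‖₊ : ℝ≥0∞) ^ p)
    (nx : Ω → ℝ≥0∞) (hnx : IsCondExpNN m₀ μ (fun ω => (‖x ω‖₊ : ℝ≥0∞) ^ p) nx) :
    (∀ y : Ω → ℝ, Measurable[mT] y →
      CondIntegrable μ m₀ (fun ω => (‖y ω‖₊ : ℝ≥0∞) ^ q) →
      (∀ ny : Ω → ℝ≥0∞, IsCondExpNN m₀ μ (fun ω => (‖y ω‖₊ : ℝ≥0∞) ^ q) ny →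
        ∀ᵐ ω ∂μ, ny ω ^ (1 / q) ≤ 1) →
      ∀ k : Ω → ℝ, IsCondExpR m₀ μ (fun ω => x ω * y ω) k →
        ∀ᵐ ω ∂μ, ENNReal.ofReal |k ω| ≤ nx ω ^ (1 / p)) ∧
    (∀ u : Ω → ℝ≥0∞, Measurable[m₀] u →
      (∀ y : Ω → ℝ, Measurable[mT] y →
        CondIntegrable μ m₀ (fun ω => (‖y ω‖₊ : ℝ≥0∞) ^ q) →
        (∀ ny : Ω → ℝ≥0∞, IsCondExpNN m₀ μ (fun ω => (‖y ω‖₊ : ℝ≥0∞) ^ q) ny →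
          ∀ᵐ ω ∂μ, ny ω ^ (1 / q) ≤ 1) →
        ∀ k : Ω → ℝ, IsCondExpR m₀ μ (fun ω => x ω * y ω) k →
          ∀ᵐ ω ∂μ, ENNReal.ofReal |k ω| ≤ u ω) →
      ∀ᵐ ω ∂μ, nx ω ^ (1 / p) ≤ u ω) := by
  classical
  have hpq : Real.HolderConjugate p q := (Real.holderConjugate_iff_eq_conjExponent hp).2 hq
  refine ⟨fun y hy hyint hyb k hk => ?_, fun u hu h => ?_⟩
  · exact Stmt17Aux4.part1 (h₀T.trans hTm) hpq (hx.mono hTm le_rfl) hxint hnx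
      (hy.mono hTm le_rfl) hyint hyb hk
  · exact Stmt17Aux5.part2 h₀T hTm hpq hx hxint hnx u hu h
end

section
/- Let (B, ‖·‖) be a uniformly convex Banach space and V a closed convex subset of B. Then L⁰(F, V), the set of equivalence classes of V-valued strongly measurable functions on (Ω, F, P), viewed as a closed L⁰-convex subset of the complete RN module L⁰(F, B), has random normal structure. -/
open MeasureTheory Filter Function Set
open scoped ENNReal NNReal

/-- Let `(B, ‖·‖)` be a uniformly convex Banach space and `V` a closed
convex subset of `B`. Then `L⁰(F, V)`, viewed as a closed `L⁰`-convex subset of the complete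
RN module `L⁰(F, B)` of (classes of) strongly measurable `B`-valued functions, has random
normal structure: every nonempty a.s. bounded, `(ε,λ)`-sequentially closed, `L⁰`-convex
subset `H` of `L⁰(F, V)` whose random diameter `D` is positive on a set of positive measure
contains a point `h` whose random radius is `< D` a.e. on `(D > 0)`. -/
theorem stmt18
    {Ω B : Type*} [MeasurableSpace Ω] (μ : Measure Ω) [IsProbabilityMeasure μ]
    [NormedAddCommGroup B] [NormedSpace ℝ B] [CompleteSpace B] [UniformConvexSpace B]
    (V : Set B) (hVclosed : IsClosed V) (hVconvex : Convex ℝ V)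
    (H : Set (Ω → B)) (hHne : H.Nonempty)
    -- every element of `H` is a strongly measurable `V`-valued function
    (hHmem : ∀ f ∈ H, StronglyMeasurable f ∧ ∀ᵐ ω ∂μ, f ω ∈ V)
    -- `H` is sequentially closed in `L⁰(F, V)` for the `(ε,λ)`-topology
    (hHclosed : ∀ (f : ℕ → Ω → B) (g : Ω → B), (∀ n, f n ∈ H) →
      StronglyMeasurable g → (∀ᵐ ω ∂μ, g ω ∈ V) →
      (∀ ε : ℝ, 0 < ε →
        Tendsto (fun n => μ {ω | ε ≤ ‖f n ω - g ω‖}) atTop (nhds 0)) → g ∈ H)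
    -- `H` is `L⁰`-convex
    (hHconvex : ∀ f ∈ H, ∀ g ∈ H, ∀ ξ : Ω → ℝ, Measurable ξ →
      (∀ ω, 0 ≤ ξ ω) → (∀ ω, ξ ω ≤ 1) →
      (fun ω => ξ ω • f ω + (1 - ξ ω) • g ω) ∈ H)
    -- `H` is a.s. bounded
    (hHbdd : ∃ η : Ω → ℝ, Measurable η ∧ ∀ f ∈ H, ∀ᵐ ω ∂μ, ‖f ω‖ ≤ η ω)
    -- `D` is the random diameter of `H`, positive on a set of positive measure
    (D : Ω → ℝ) (hDm : Measurable D)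
    (hDub : ∀ f ∈ H, ∀ g ∈ H, ∀ᵐ ω ∂μ, ‖f ω - g ω‖ ≤ D ω)
    (hDlub : ∀ D' : Ω → ℝ, Measurable D' →
      (∀ f ∈ H, ∀ g ∈ H, ∀ᵐ ω ∂μ, ‖f ω - g ω‖ ≤ D' ω) → ∀ᵐ ω ∂μ, D ω ≤ D' ω)
    (hDpos : 0 < μ {ω | 0 < D ω}) :
    ∃ h ∈ H, ∃ r : Ω → ℝ, Measurable r ∧
      (∀ f ∈ H, ∀ᵐ ω ∂μ, ‖h ω - f ω‖ ≤ r ω) ∧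
      ∀ᵐ ω ∂μ, 0 < D ω → r ω < D ω := by
  classical
  obtain ⟨f₀, hf₀⟩ := hHne
  -- gluing two elements of `H` along a measurable set
  have hglue : ∀ (A : Set Ω), MeasurableSet A → ∀ f ∈ H, ∀ g ∈ H,
      (fun ω => if ω ∈ A then f ω else g ω) ∈ H := by
    intro A hA f hf g hg
    have hξ : Measurable (fun ω => if ω ∈ A then (1 : ℝ) else 0) :=
      Measurable.ite hA measurable_const measurable_const
    have key := hHconvex f hf g hg _ hξ
      (fun ω => by by_cases h : ω ∈ A <;> simp [h])
      (fun ω => by by_cases h : ω ∈ A <;> simp [h])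
    have heq : (fun ω => (if ω ∈ A then (1 : ℝ) else 0) • f ω
        + (1 - if ω ∈ A then (1 : ℝ) else 0) • g ω)
        = fun ω => if ω ∈ A then f ω else g ω := by
      funext ω; by_cases h : ω ∈ A <;> simp [h]
    exact heq ▸ key
  -- gluing countably many elements of `H` along a measurable partition
  have hglueSeq : ∀ (fs : ℕ → Ω → B), (∀ n, fs n ∈ H) → ∀ N : Ω → ℕ, Measurable N →
      (fun ω => fs (N ω) ω) ∈ H := by
    intro fs hfs N hNm
    set uk : ℕ → Ω → B := fun k ω => if N ω ≤ k then fs (N ω) ω else fs 0 ω with huk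
    have hukH : ∀ k, uk k ∈ H := by
      intro k
      induction k with
      | zero =>
        have h0 : uk 0 = fs 0 := by
          funext ω
          simp only [huk]
          split
          · next h => rw [Nat.le_zero.mp h]
          · rfl
        rw [h0]; exact hfs 0
      | succ k ih =>
        have h1 := hglue {ω | N ω = k + 1} (hNm (measurableSet_singleton (k + 1)))
          (fs (k + 1)) (hfs (k + 1)) (uk k) ih
        convert h1 using 1
        funext ω
        simp only [huk, Set.mem_setOf_eq]
        by_cases h : N ω = k + 1
        · simp [h]
        · by_cases h2 : N ω ≤ k
          · simp [h, h2, Nat.le_succ_of_le h2]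
          · have h3 : ¬ N ω ≤ k + 1 := by omega
            simp [h, h2, h3]
    have hsm : StronglyMeasurable (fun ω => fs (N ω) ω) := by
      refine stronglyMeasurable_of_tendsto atTop (fun k => (hHmem _ (hukH k)).1) ?_
      rw [tendsto_pi_nhds]
      intro ω
      refine tendsto_atTop_of_eventually_const (i₀ := N ω) ?_
      intro k hk
      simp only [huk, if_pos hk]
    have hV : ∀ᵐ ω ∂μ, fs (N ω) ω ∈ V := by
      have hall : ∀ᵐ ω ∂μ, ∀ n, fs n ω ∈ V := ae_all_iff.2 fun n => (hHmem _ (hfs n)).2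
      filter_upwards [hall] with ω h using h (N ω)
    refine hHclosed uk _ hukH hsm hV ?_
    intro ε hε
    have hsub : ∀ k, {ω | ε ≤ ‖uk k ω - fs (N ω) ω‖} ⊆ {ω | k < N ω} := by
      intro k ω hω
      by_contra hcon
      simp only [Set.mem_setOf_eq, not_lt] at hcon
      simp only [Set.mem_setOf_eq, huk, if_pos hcon, sub_self, norm_zero] at hω
      linarith
    have hmeas : ∀ k : ℕ, MeasurableSet {ω | k < N ω} := by
      intro k
      exact hNm ((Set.to_countable (Set.Ioi k)).measurableSet)
    have hmono : Antitone fun k : ℕ => {ω | k < N ω} := by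
      intro a b hab ω hω
      exact lt_of_le_of_lt hab hω
    have hint : ⋂ k : ℕ, {ω | k < N ω} = ∅ := by
      ext ω
      simp only [Set.mem_iInter, Set.mem_setOf_eq, Set.mem_empty_iff_false, iff_false,
        not_forall, not_lt]
      exact ⟨N ω, le_refl _⟩
    have h0 : Tendsto (fun k : ℕ => μ {ω | k < N ω}) atTop (nhds 0) := by
      have ht := tendsto_measure_iInter_atTop (μ := μ)
        (fun k => (hmeas k).nullMeasurableSet) hmono ⟨0, measure_ne_top μ _⟩
      rw [hint, measure_empty] at ht
      exact ht
    exact tendsto_of_tendsto_of_tendsto_of_le_of_le tendsto_const_nhds h0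
      (fun k => zero_le) (fun k => measure_mono (hsub k))
  -- the "bad" sets where a pair nearly achieves the diameter
  have hEmeas : ∀ f ∈ H, ∀ g ∈ H, MeasurableSet {ω | D ω / 2 < ‖f ω - g ω‖} := by
    intro f hf g hg
    exact measurableSet_lt (hDm.div_const 2)
      ((hHmem f hf).1.sub (hHmem g hg).1).norm.measurable
  -- countable family of pairs whose union of bad sets has maximal measure
  set P := {p : ℕ → (Ω → B) × (Ω → B) // ∀ n, (p n).1 ∈ H ∧ (p n).2 ∈ H} with hP
  have hPne : Nonempty P := ⟨⟨fun _ => (f₀, f₀), fun _ => ⟨hf₀, hf₀⟩⟩⟩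
  set m := ⨆ p : P, μ (⋃ n, {ω | D ω / 2 < ‖(p.1 n).1 ω - (p.1 n).2 ω‖}) with hm
  have hmfin : m ≠ ∞ := by
    refine ne_of_lt (lt_of_le_of_lt (iSup_le fun p => measure_mono (Set.subset_univ _)) ?_)
    exact lt_of_le_of_lt le_rfl (measure_lt_top μ Set.univ)
  have hex : ∀ k : ℕ, ∃ p : P,
      m - 1 / (k + 1) ≤ μ (⋃ n, {ω | D ω / 2 < ‖(p.1 n).1 ω - (p.1 n).2 ω‖}) := by
    intro k
    rcases le_or_gt m (1 / (k + 1)) with h | h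
    · refine ⟨hPne.some, ?_⟩
      rw [tsub_eq_zero_of_le h]
      exact zero_le
    · have hne0 : m ≠ 0 := by
        intro h0
        rw [h0] at h
        exact absurd h (by simp)
      have hεne : (1 : ℝ≥0∞) / (k + 1) ≠ 0 := by
        simp [ENNReal.div_eq_zero_iff]
      have hlt : m - 1 / (k + 1) < m := ENNReal.sub_lt_self hmfin hne0 hεne
      rw [hm] at hlt
      obtain ⟨p, hp⟩ := lt_iSup_iff.mp hlt
      exact ⟨p, hp.le⟩
  choose q hq using hex
  set e : ℕ ≃ ℕ × ℕ := (Denumerable.eqv (ℕ × ℕ)).symm with he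
  set FS : ℕ → Ω → B := fun i => ((q (e i).1).1 (e i).2).1 with hFS'
  set GS : ℕ → Ω → B := fun i => ((q (e i).1).1 (e i).2).2 with hGS'
  have hFS : ∀ i, FS i ∈ H := fun i => ((q (e i).1).2 (e i).2).1
  have hGS : ∀ i, GS i ∈ H := fun i => ((q (e i).1).2 (e i).2).2
  set U := ⋃ i, {ω | D ω / 2 < ‖FS i ω - GS i ω‖} with hU
  have hUmeas : MeasurableSet U :=
    MeasurableSet.iUnion fun i => hEmeas _ (hFS i) _ (hGS i)
  have hUge : ∀ k : ℕ, m - 1 / (k + 1) ≤ μ U := by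
    intro k
    refine le_trans (hq k) (measure_mono ?_)
    refine Set.iUnion_subset fun n => ?_
    have heq : {ω | D ω / 2 < ‖((q k).1 n).1 ω - ((q k).1 n).2 ω‖}
        = {ω | D ω / 2 < ‖FS (e.symm (k, n)) ω - GS (e.symm (k, n)) ω‖} := by
      simp [hFS', hGS', Equiv.apply_symm_apply]
    rw [heq]
    exact Set.subset_iUnion (fun i => {ω | D ω / 2 < ‖FS i ω - GS i ω‖}) (e.symm (k, n))
  have hUm : m ≤ μ U := by
    by_contra hcon
    push_neg at hcon
    have hδ0 : m - μ U ≠ 0 := (tsub_pos_of_lt hcon).ne'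
    obtain ⟨n, hn⟩ := ENNReal.exists_inv_nat_lt hδ0
    have h1 : m ≤ μ U + 1 / (n + 1) := by
      have := hUge n
      exact tsub_le_iff_right.mp this
    have h2 : (1 : ℝ≥0∞) / (n + 1) < m - μ U := by
      refine lt_of_le_of_lt ?_ hn
      rw [one_div]
      exact ENNReal.inv_le_inv.mpr (by
        norm_cast
        exact Nat.le_succ n)
    have h3 : μ U + 1 / (n + 1) < μ U + (m - μ U) :=
      ENNReal.add_lt_add_left (measure_ne_top μ U) h2
    rw [add_tsub_cancel_of_le hcon.le] at h3
    exact absurd (lt_of_le_of_lt h1 h3) (lt_irrefl m)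
  -- every bad set is a.e. contained in U
  have hnull : ∀ f ∈ H, ∀ g ∈ H, μ ({ω | D ω / 2 < ‖f ω - g ω‖} \ U) = 0 := by
    intro f hf g hg
    set E := {ω | D ω / 2 < ‖f ω - g ω‖} with hE
    set p' : P := ⟨fun i => if i = 0 then (f, g) else (FS (i - 1), GS (i - 1)), by
      intro n
      cases n with
      | zero => exact ⟨hf, hg⟩
      | succ n => exact ⟨hFS n, hGS n⟩⟩ with hp'
    have hsub : E ∪ U ⊆ ⋃ n, {ω | D ω / 2 < ‖(p'.1 n).1 ω - (p'.1 n).2 ω‖} := by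
      rintro ω (hω | hω)
      · refine Set.mem_iUnion.mpr ⟨0, ?_⟩
        simpa [hp', hE] using hω
      · obtain ⟨i, hi⟩ := Set.mem_iUnion.mp hω
        refine Set.mem_iUnion.mpr ⟨i + 1, ?_⟩
        simpa [hp'] using hi
    have hle : μ (E ∪ U) ≤ m := by
      rw [hm]
      exact le_trans (measure_mono hsub)
        (le_iSup (fun p : P => μ (⋃ n, {ω | D ω / 2 < ‖(p.1 n).1 ω - (p.1 n).2 ω‖})) p')
    have hEU : MeasurableSet (E \ U) := ((hEmeas f hf g hg).diff hUmeas)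
    have hsplit : μ U + μ (E \ U) = μ (U ∪ E) := by
      rw [← measure_union (disjoint_sdiff_self_right) hEU, Set.union_diff_self]
    have hfinal : μ U + μ (E \ U) ≤ μ U + 0 := by
      rw [add_zero, hsplit, Set.union_comm]
      exact le_trans hle hUm
    have := (ENNReal.add_le_add_iff_left (measure_ne_top μ U)).mp hfinal
    exact le_antisymm this zero_le
  -- D is nonnegative a.e.
  have hDnonneg : ∀ᵐ ω ∂μ, 0 ≤ D ω := by
    filter_upwards [hDub f₀ hf₀ f₀ hf₀] with ω h
    simpa using h
  -- a.e. on {D > 0}, ω lies in U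
  have hFnull : ∀ᵐ ω ∂μ, 0 < D ω → ω ∈ U := by
    set D'' : Ω → ℝ := fun ω => if ω ∈ {ω | 0 < D ω} \ U then D ω / 2 else D ω with hD''
    have hD''m : Measurable D'' :=
      Measurable.ite ((measurableSet_lt measurable_const hDm).diff hUmeas)
        (hDm.div_const 2) hDm
    have hub : ∀ f ∈ H, ∀ g ∈ H, ∀ᵐ ω ∂μ, ‖f ω - g ω‖ ≤ D'' ω := by
      intro f hf g hg
      have h1 := hDub f hf g hg
      have h2 : ∀ᵐ ω ∂μ, ω ∉ {ω | D ω / 2 < ‖f ω - g ω‖} \ U := by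
        rw [← MeasureTheory.measure_eq_zero_iff_ae_notMem]
        exact hnull f hf g hg
      filter_upwards [h1, h2] with ω h1 h2
      by_cases hω : ω ∈ {ω | 0 < D ω} \ U
      · have h3 : ω ∉ {ω | D ω / 2 < ‖f ω - g ω‖} := fun hE => h2 ⟨hE, hω.2⟩
        simp only [Set.mem_setOf_eq, not_lt] at h3
        simp only [hD'', if_pos hω]
        exact h3
      · simp only [hD'', if_neg hω]
        exact h1
    have h3 := hDlub D'' hD''m hub
    filter_upwards [h3] with ω h3 hD
    by_contra hU'
    have hω : ω ∈ {ω | 0 < D ω} \ U := ⟨hD, hU'⟩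
    simp only [hD'', if_pos hω] at h3
    linarith
  -- measurable selection of a near-diameter pair
  have hexN : ∀ ω, ∃ n, ω ∈ {ω | D ω / 2 < ‖FS n ω - GS n ω‖} ∨ ω ∉ U := by
    intro ω
    by_cases h : ω ∈ U
    · obtain ⟨i, hi⟩ := Set.mem_iUnion.mp h
      exact ⟨i, Or.inl hi⟩
    · exact ⟨0, Or.inr h⟩
  set N : Ω → ℕ := fun ω => Nat.find (hexN ω) with hNdef
  have hNmeas : Measurable N := by
    refine measurable_find hexN fun k => ?_
    exact (hEmeas _ (hFS k) _ (hGS k)).union hUmeas.compl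
  have hNkey : ∀ ω, ω ∈ U → D ω / 2 < ‖FS (N ω) ω - GS (N ω) ω‖ := by
    intro ω hω
    rcases Nat.find_spec (hexN ω) with h | h
    · exact h
    · exact absurd hω h
  set u : Ω → B := fun ω => FS (N ω) ω with hudef
  set v : Ω → B := fun ω => GS (N ω) ω with hvdef
  have huH : u ∈ H := hglueSeq FS hFS N hNmeas
  have hvH : v ∈ H := hglueSeq GS hGS N hNmeas
  -- uniform convexity modulus
  obtain ⟨δ, hδpos, hδ⟩ :=
    exists_forall_closed_ball_dist_add_le_two_sub B (by norm_num : (0 : ℝ) < 1 / 2)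
  have hhH := hHconvex u huH v hvH (fun _ => (1 : ℝ) / 2) measurable_const
    (fun _ => by norm_num) (fun _ => by norm_num)
  refine ⟨_, hhH, fun ω => (1 - δ / 2) * D ω, (measurable_const.mul hDm), ?_, ?_⟩
  · intro f hf
    filter_upwards [hDub u huH f hf, hDub v hvH f hf, hDub _ hhH f hf, hFnull, hDnonneg]
      with ω h1 h2 h3 hcover h0
    show ‖(1 / 2 : ℝ) • u ω + (1 - (1 / 2 : ℝ)) • v ω - f ω‖ ≤ (1 - δ / 2) * D ω
    by_cases hD : 0 < D ω
    · have hkey := hNkey ω (hcover hD)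
      have hd : D ω ≠ 0 := ne_of_gt hD
      have hinv : (0 : ℝ) ≤ (D ω)⁻¹ := inv_nonneg.mpr hD.le
      set x := (D ω)⁻¹ • (u ω - f ω) with hx
      set y := (D ω)⁻¹ • (v ω - f ω) with hy
      have hxn : ‖x‖ ≤ 1 := by
        rw [hx, norm_smul, norm_inv, Real.norm_eq_abs, abs_of_pos hD]
        calc (D ω)⁻¹ * ‖u ω - f ω‖ ≤ (D ω)⁻¹ * D ω :=
              mul_le_mul_of_nonneg_left h1 hinv
          _ = 1 := inv_mul_cancel₀ hd
      have hyn : ‖y‖ ≤ 1 := by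
        rw [hy, norm_smul, norm_inv, Real.norm_eq_abs, abs_of_pos hD]
        calc (D ω)⁻¹ * ‖v ω - f ω‖ ≤ (D ω)⁻¹ * D ω :=
              mul_le_mul_of_nonneg_left h2 hinv
          _ = 1 := inv_mul_cancel₀ hd
      have hxy : 1 / 2 ≤ ‖x - y‖ := by
        have hx_y : x - y = (D ω)⁻¹ • (u ω - v ω) := by
          rw [hx, hy, ← smul_sub]
          congr 1
          abel
        rw [hx_y, norm_smul, norm_inv, Real.norm_eq_abs, abs_of_pos hD]
        have h2' : D ω * (1 / 2) ≤ ‖u ω - v ω‖ := by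
          have huv : ‖u ω - v ω‖ = ‖FS (N ω) ω - GS (N ω) ω‖ := by rw [hudef, hvdef]
          rw [huv]
          linarith
        calc (1 : ℝ) / 2 = (D ω)⁻¹ * (D ω * (1 / 2)) := by field_simp
          _ ≤ (D ω)⁻¹ * ‖u ω - v ω‖ := mul_le_mul_of_nonneg_left h2' hinv
      have hsum := hδ hxn hyn hxy
      have hx_plus_y : x + y = (D ω)⁻¹ • ((u ω - f ω) + (v ω - f ω)) := by
        rw [hx, hy, smul_add]
      rw [hx_plus_y, norm_smul, norm_inv, Real.norm_eq_abs, abs_of_pos hD] at hsum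
      have hnorm : ‖(u ω - f ω) + (v ω - f ω)‖ ≤ (2 - δ) * D ω := by
        calc ‖(u ω - f ω) + (v ω - f ω)‖
            = D ω * ((D ω)⁻¹ * ‖(u ω - f ω) + (v ω - f ω)‖) := by field_simp
          _ ≤ D ω * (2 - δ) := mul_le_mul_of_nonneg_left hsum hD.le
          _ = (2 - δ) * D ω := mul_comm _ _
      have heq : (1 / 2 : ℝ) • u ω + (1 - (1 / 2 : ℝ)) • v ω - f ω
          = (1 / 2 : ℝ) • ((u ω - f ω) + (v ω - f ω)) := by module
      rw [heq, norm_smul, Real.norm_eq_abs]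
      have habs : |(1 / 2 : ℝ)| = 1 / 2 := by norm_num
      rw [habs]
      linarith
    · have hD0 : D ω = 0 := le_antisymm (not_lt.mp hD) h0
      rw [hD0, mul_zero]
      calc ‖(1 / 2 : ℝ) • u ω + (1 - (1 / 2 : ℝ)) • v ω - f ω‖ ≤ D ω := h3
        _ = 0 := hD0
  · filter_upwards with ω hD
    nlinarith [mul_pos (half_pos hδpos) hD]
end
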